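/- arXiv:0901.2669 — 6 statements merged into one kernel-verified Lean document; each statement's English description precedes it below -/
import Mathlib

section
/- For 0 ≤ s < n/2, the Radon transform R_s : L²(P_s) → L²(P_{s+1}) is injective. -/
/-!
Write `R_s` as multiplication by the inclusion matrix `M` of `s`-sets into `(s + 1)`-sets. The
entry `(Z, W)` of the Gram matrix `Mᴴ M` counts the `(s + 1)`-sets containing `Z ∪ W`; comparing
with the `(s - 1)`-sets contained in `Z ∩ W` gives `Mᴴ M = N Nᴴ + (n - 2s) I` with `N` the
inclusion matrix one level down. For `2s < n` this is positive definite, so `M` is injective.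
-/

open Finset Matrix

/-- `Pset n s` is the set of `s`-element subsets of `{1,…,n}`. -/
abbrev Pset (n s : ℕ) := {X : Finset (Fin n) // X.card = s}

/-- The Radon transform `R_s : L²(P_s) → L²(P_{s+1})`. -/
noncomputable def Radon (n s : ℕ) (f : Pset n s → ℂ) (X : Pset n (s + 1)) : ℂ :=
  ∑ Z : Pset n s, if Z.1 ⊆ X.1 then f Z else 0

section Counting

variable {α : Type*} [DecidableEq α] {s : ℕ} {Z W : Finset α}

lemma card_inter_lt_of_ne (hZ : #Z = s) (hW : #W = s) (hZW : Z ≠ W) : #(Z ∩ W) < s := by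
  refine lt_of_le_of_ne (hZ ▸ card_le_card inter_subset_left) fun h => hZW ?_
  have hZ' : Z ∩ W = Z := eq_of_subset_of_card_le inter_subset_left (by omega)
  have hW' : Z ∩ W = W := eq_of_subset_of_card_le inter_subset_right (by omega)
  exact hZ'.symm.trans hW'

variable [Fintype α]

lemma card_filter_powersetCard_superset_pair (hZ : #Z = s) (hW : #W = s) :
    #{X ∈ univ.powersetCard (s + 1) | Z ⊆ X ∧ W ⊆ X} =
      if Z = W then Fintype.card α - s else if #(Z ∩ W) + 1 = s then 1 else 0 := by
  simp_rw [← union_subset_iff]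
  have hunion : #(Z ∪ W) + #(Z ∩ W) = 2 * s := by rw [card_union_add_card_inter]; omega
  split_ifs with hZW hm
  · subst hZW
    rw [union_self, card_filter_powersetCard_subset _ _ _ (subset_univ _) (by omega), hZ,
      card_univ, Nat.add_sub_cancel_left, Nat.choose_one_right]
  · rw [card_filter_powersetCard_subset _ _ _ (subset_univ _) (by omega)]
    simp [show #(Z ∪ W) = s + 1 by omega]
  · have := card_inter_lt_of_ne hZ hW hZW
    rw [card_eq_zero, filter_eq_empty_iff]
    intro X hX hsub
    have := card_le_card hsub
    rw [mem_powersetCard_univ] at hX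
    omega

lemma card_filter_subset_pair (hZ : #Z = s) (hW : #W = s) :
    #{Y : Finset α | Y ⊆ Z ∧ Y ⊆ W ∧ #Y + 1 = s} =
      if Z = W then s else if #(Z ∩ W) + 1 = s then 1 else 0 := by
  obtain _ | k := s
  · simp
  have hfilter : ({Y : Finset α | Y ⊆ Z ∧ Y ⊆ W ∧ #Y + 1 = k + 1} : Finset _) =
      (Z ∩ W).powersetCard k := by
    ext Y
    simp [mem_powersetCard, subset_inter_iff, and_assoc]
  rw [hfilter, card_powersetCard]
  split_ifs with hZW hm
  · subst hZW
    rw [inter_self, hZ, Nat.choose_succ_self_right]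
  · rw [show #(Z ∩ W) = k by omega, Nat.choose_self]
  · exact Nat.choose_eq_zero_of_lt (by have := card_inter_lt_of_ne hZ hW hZW; omega)

end Counting

section InclusionMatrix

variable (R : Type*) (n s : ℕ)

def inclusionMatrix [Zero R] [One R] : Matrix (Pset n (s + 1)) (Pset n s) R :=
  of fun X Z => if Z.1 ⊆ X.1 then 1 else 0

/-- Columns are indexed by all finsets, but only the `(s - 1)`-sets count; writing `#Y + 1 = s`
rather than `#Y = s - 1` leaves no such column when `s = 0`. -/
def lowerInclusionMatrix [Zero R] [One R] : Matrix (Pset n s) (Finset (Fin n)) R :=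
  of fun Z Y => if Y ⊆ Z.1 ∧ #Y + 1 = s then 1 else 0

lemma sum_pset_boole [AddCommMonoidWithOne R] {k : ℕ} (p : Finset (Fin n) → Prop)
    [DecidablePred p] :
    ∑ X : Pset n k, (if p X.1 then (1 : R) else 0) = #{X ∈ univ.powersetCard k | p X} := by
  rw [← sum_subtype _ (fun _ => mem_powersetCard_univ) (fun X => if p X then (1 : R) else 0),
    sum_boole]

lemma conjTranspose_inclusionMatrix_mul_self_apply [Semiring R] [StarRing R] (Z W : Pset n s) :
    ((inclusionMatrix R n s)ᴴ * inclusionMatrix R n s) Z W =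
      #{X ∈ univ.powersetCard (s + 1) | Z.1 ⊆ X ∧ W.1 ⊆ X} := by
  simp only [mul_apply, conjTranspose_apply, inclusionMatrix, of_apply, apply_ite star, star_one,
    star_zero, ite_mul, one_mul, zero_mul, ← ite_and]
  exact sum_pset_boole R n fun X => Z.1 ⊆ X ∧ W.1 ⊆ X

lemma lowerInclusionMatrix_mul_conjTranspose_apply [Semiring R] [StarRing R] (Z W : Pset n s) :
    (lowerInclusionMatrix R n s * (lowerInclusionMatrix R n s)ᴴ) Z W =
      #{Y : Finset (Fin n) | Y ⊆ Z.1 ∧ Y ⊆ W.1 ∧ #Y + 1 = s} := by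
  simp only [mul_apply, conjTranspose_apply, lowerInclusionMatrix, of_apply, apply_ite star,
    star_one, star_zero, mul_ite, mul_one, mul_zero, ← ite_and, sum_boole]
  congr 2
  ext Y
  simp only [mem_filter, mem_univ, true_and]
  tauto

theorem conjTranspose_inclusionMatrix_mul_self [CommRing R] [StarRing R] :
    (inclusionMatrix R n s)ᴴ * inclusionMatrix R n s =
      lowerInclusionMatrix R n s * (lowerInclusionMatrix R n s)ᴴ +
        ((n - 2 * s : ℤ) : Matrix (Pset n s) (Pset n s) R) := by
  ext Z W
  have hsn : s ≤ n := Z.2 ▸ (card_le_univ Z.1).trans (Fintype.card_fin n).le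
  have hup := card_filter_powersetCard_superset_pair Z.2 W.2
  rw [Fintype.card_fin] at hup
  rw [Matrix.add_apply, Matrix.intCast_apply, conjTranspose_inclusionMatrix_mul_self_apply,
    lowerInclusionMatrix_mul_conjTranspose_apply, hup, card_filter_subset_pair Z.2 W.2]
  rcases eq_or_ne Z W with rfl | hZW
  · simp only [if_true]
    push_cast [Nat.cast_sub hsn]
    ring
  · simp only [if_neg hZW, if_neg (Subtype.coe_ne_coe.mpr hZW), Int.cast_zero, add_zero]

end InclusionMatrix

open scoped ComplexOrder

variable {𝕜 : Type*} [RCLike 𝕜] {n s : ℕ}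

theorem posDef_conjTranspose_inclusionMatrix_mul_self (h : 2 * s < n) :
    ((inclusionMatrix 𝕜 n s)ᴴ * inclusionMatrix 𝕜 n s).PosDef := by
  rw [conjTranspose_inclusionMatrix_mul_self]
  exact PosDef.posSemidef_add (posSemidef_self_mul_conjTranspose _) (.intCast _ (by omega))

theorem mulVec_inclusionMatrix_injective (h : 2 * s < n) :
    Function.Injective (inclusionMatrix 𝕜 n s *ᵥ ·) := by
  have hunit := (posDef_conjTranspose_inclusionMatrix_mul_self (𝕜 := 𝕜) h).isUnit
  refine Function.Injective.of_comp (f := ((inclusionMatrix 𝕜 n s)ᴴ *ᵥ ·)) ?_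
  simpa only [Function.comp_def, mulVec_mulVec] using mulVec_injective_iff_isUnit.mpr hunit

theorem radon_eq_mulVec (f : Pset n s → ℂ) : Radon n s f = inclusionMatrix ℂ n s *ᵥ f := by
  ext X
  simp only [Radon, mulVec, dotProduct, inclusionMatrix, of_apply, ite_mul, one_mul, zero_mul]

/-- For `0 ≤ s < n/2`, the Radon transform `R_s : L²(P_s) → L²(P_{s+1})` is injective. -/
theorem stmt5 (n s : ℕ) (h : 2 * s < n) : Function.Injective (Radon n s) := by
  simpa only [funext radon_eq_mulVec] using mulVec_inclusionMatrix_injective h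
end

section
/- The function Φ_t on P_s given by Φ_t(X) = Σ_{k=k₀}^{min(j,t)} (−1)^k C(s−j, t−k) C(j,k) γ_t^k, where j = d(X₀,X), γ_t^k = C(s,t)^{−1} · (s−t+k)!(n−s−k)! / ((s−t)!(n−s)!), and k₀ = max(0, t+j−s), is the spherical function of the irreducible component H^t of L²(P_s); in particular Φ_t(X₀) = 1 and Φ_t is invariant under the stabilizer of X₀. -/
/-- The iterated Radon transform `R_{t+m-1} ∘ ⋯ ∘ R_t : L²(P_t) → L²(P_{t+m})`. -/
noncomputable def RadonIter (n t : ℕ) : (m : ℕ) → (Pset n t → ℂ) → (Pset n (t + m) → ℂ)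
  | 0, f => f
  | m + 1, f => Radon n (t + m) (RadonIter n t m f)

open Finset
open scoped Nat

namespace Finset

variable {α : Type*} [DecidableEq α]

lemma card_filter_card_inter_powersetCard_union {A B : Finset α} (hAB : Disjoint A B)
    {t i : ℕ} (hit : i ≤ t) :
    #{Y ∈ (A ∪ B).powersetCard t | #(Y ∩ A) = i} = (#A).choose i * (#B).choose (t - i) := by
  rw [← card_powersetCard, ← card_powersetCard, ← card_product]
  have hsplit : ∀ Y ⊆ A ∪ B, Y ∩ A ∪ Y ∩ B = Y := fun Y hY => by
    rw [← inter_union_distrib_left, inter_eq_left.2 hY]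
  have hglue : ∀ P Q, P ⊆ A → Q ⊆ B → (P ∪ Q) ∩ A = P ∧ (P ∪ Q) ∩ B = Q := fun P Q hP hQ => by
    rw [union_inter_distrib_right, union_inter_distrib_right, inter_eq_left.2 hP,
      inter_eq_left.2 hQ, disjoint_iff_inter_eq_empty.1 (hAB.mono_left hP),
      disjoint_iff_inter_eq_empty.1 (hAB.symm.mono_left hQ), union_empty, empty_union]
    exact ⟨rfl, rfl⟩
  refine card_nbij' (fun Y => (Y ∩ A, Y ∩ B)) (fun P => P.1 ∪ P.2) ?_ ?_ ?_ ?_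
  · intro Y hY
    simp only [mem_coe, mem_filter, mem_powersetCard] at hY
    obtain ⟨⟨hYAB, hYt⟩, hYi⟩ := hY
    have := card_union_of_disjoint (hAB.mono inter_subset_right inter_subset_right :
      Disjoint (Y ∩ A) (Y ∩ B))
    rw [hsplit Y hYAB] at this
    simp only [mem_coe, mem_product, mem_powersetCard]
    exact ⟨⟨inter_subset_right, hYi⟩, inter_subset_right, by omega⟩
  · rintro ⟨P, Q⟩ hPQ
    simp only [mem_coe, mem_product, mem_powersetCard] at hPQ
    obtain ⟨⟨hPA, hPi⟩, hQB, hQt⟩ := hPQ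
    simp only [mem_coe, mem_filter, mem_powersetCard]
    refine ⟨⟨union_subset_union hPA hQB, ?_⟩, by rw [(hglue P Q hPA hQB).1, hPi]⟩
    rw [card_union_of_disjoint (hAB.mono hPA hQB)]
    omega
  · intro Y hY
    exact hsplit Y (mem_powersetCard.1 (mem_filter.1 hY).1).1
  · rintro ⟨P, Q⟩ hPQ
    simp only [mem_coe, mem_product, mem_powersetCard] at hPQ
    obtain ⟨h1, h2⟩ := hglue P Q hPQ.1.1 hPQ.2.1
    exact Prod.ext h1 h2

lemma sum_powersetCard_card_inter {M : Type*} [AddCommMonoid M] (X A : Finset α) (t : ℕ)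
    (f : ℕ → M) :
    ∑ Y ∈ X.powersetCard t, f #(Y ∩ A)
      = ∑ i ∈ range (t + 1), ((#(X ∩ A)).choose i * (#(X \ A)).choose (t - i)) • f i := by
  have hX : X ∩ A ∪ X \ A = X := sup_inf_sdiff X A
  have hA : ∀ Y ∈ X.powersetCard t, #(Y ∩ A) = #(Y ∩ (X ∩ A)) := fun Y hY => by
    rw [← inter_assoc, inter_eq_left.2 (mem_powersetCard.1 hY).1]
  have maps : ∀ Y ∈ X.powersetCard t, #(Y ∩ (X ∩ A)) ∈ range (t + 1) := fun Y hY => by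
    have := card_le_card (inter_subset_left : Y ∩ (X ∩ A) ⊆ Y)
    rw [(mem_powersetCard.1 hY).2] at this
    exact mem_range_succ_iff.2 this
  rw [sum_congr rfl fun Y hY => congrArg f (hA Y hY), ← sum_fiberwise_of_maps_to maps]
  refine sum_congr rfl fun i hi => ?_
  have hcount := card_filter_card_inter_powersetCard_union (disjoint_sdiff_inter X A).symm
    (mem_range_succ_iff.1 hi) (t := t)
  rw [hX] at hcount
  rw [sum_congr rfl fun Y hY => congrArg f (mem_filter.1 hY).2, sum_const, hcount]

lemma card_filter_superset_powersetCard {X Y : Finset α} (hYX : Y ⊆ X) {k : ℕ} (hk : #Y ≤ k) :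
    #{Z ∈ X.powersetCard k | Y ⊆ Z} = (#X - #Y).choose (k - #Y) := by
  have hsup : ∀ Z, Y ⊆ Z ↔ #(Z ∩ Y) = #Y := fun Z => by
    rw [← inter_eq_right]
    exact ⟨fun h => by rw [h], fun h => eq_of_subset_of_card_le inter_subset_right h.ge⟩
  have hfilter : {Z ∈ X.powersetCard k | Y ⊆ Z}
      = {Z ∈ (Y ∪ X \ Y).powersetCard k | #(Z ∩ Y) = #Y} := by
    rw [union_sdiff_of_subset hYX]
    exact filter_congr fun Z _ => hsup Z
  rw [hfilter, card_filter_card_inter_powersetCard_union disjoint_sdiff hk, Nat.choose_self,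
    one_mul, card_sdiff_of_subset hYX]

lemma sum_filter_superset_powersetCard_succ [Fintype α] {M : Type*} [AddCommMonoid M]
    (Z : Finset α) (f : Finset α → M) :
    ∑ Y ∈ univ.powersetCard (#Z + 1) with Z ⊆ Y, f Y = ∑ x ∈ Zᶜ, f (insert x Z) := by
  symm
  refine sum_bij (fun x _ => insert x Z) ?_ ?_ ?_ fun _ _ => rfl
  · intro x hx
    rw [mem_compl] at hx
    simp only [mem_filter, mem_powersetCard]
    exact ⟨⟨subset_univ _, card_insert_of_notMem hx⟩, subset_insert _ _⟩
  · intro x hx y _ hxy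
    exact (insert_inj (mem_compl.1 hx)).1 hxy
  · intro Y hY
    simp only [mem_filter, mem_powersetCard] at hY
    obtain ⟨⟨-, hYc⟩, hZY⟩ := hY
    obtain ⟨x, hx⟩ := card_eq_one.1 (by rw [card_sdiff_of_subset hZY, hYc]; omega :
      #(Y \ Z) = 1)
    have hxYZ : x ∈ Y \ Z := hx ▸ mem_singleton_self x
    refine ⟨x, mem_compl.2 (mem_sdiff.1 hxYZ).2, ?_⟩
    rw [insert_eq, ← hx, sdiff_union_of_subset hZY]

lemma filter_subset_univ_powersetCard [Fintype α] (X : Finset α) (k : ℕ) :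
    {Y ∈ (univ : Finset α).powersetCard k | Y ⊆ X} = X.powersetCard k := by
  ext Y
  simp only [mem_filter, mem_powersetCard, subset_univ, true_and, and_comm]

lemma card_inter_image_perm_of_image_eq {σ : Equiv.Perm α} {A : Finset α} (hA : A.image σ = A)
    (B : Finset α) : #(A ∩ B.image σ) = #(A ∩ B) := by
  conv_lhs => rw [← hA]
  rw [← image_inter _ _ σ.injective, card_image_of_injective _ σ.injective]

end Finset

lemma sum_pset_eq_sum_powersetCard {M : Type*} [AddCommMonoid M] {n s : ℕ}
    (F : Finset (Fin n) → M) :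
    ∑ Y : Pset n s, F Y.1 = ∑ Y ∈ univ.powersetCard s, F Y :=
  (sum_subtype _ (fun Y => by rw [mem_powersetCard, and_iff_right (subset_univ Y)]) F).symm

lemma card_pset_between {n k : ℕ} {Y X : Finset (Fin n)} (hYX : Y ⊆ X) (hX : #X = k + 1)
    (hY : #Y ≤ k) :
    #{Z : Pset n k | Y ⊆ Z.1 ∧ Z.1 ⊆ X} = k + 1 - #Y := by
  have hsets : {Z ∈ (univ : Finset (Fin n)).powersetCard k | Y ⊆ Z ∧ Z ⊆ X}
      = {Z ∈ X.powersetCard k | Y ⊆ Z} := by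
    simp_rw [and_comm (a := Y ⊆ _), ← filter_filter, filter_subset_univ_powersetCard]
  rw [card_filter, sum_pset_eq_sum_powersetCard (fun Z => if Y ⊆ Z ∧ Z ⊆ X then 1 else 0),
    ← card_filter, hsets, card_filter_superset_powersetCard hYX hY, hX,
    show k + 1 - #Y = (k - #Y) + 1 by omega, Nat.choose_succ_self_right]

lemma radonIter_apply {n t : ℕ} (g : Pset n t → ℂ) (m : ℕ) (X : Pset n (t + m)) :
    RadonIter n t m g X = m ! * ∑ Y : Pset n t, if Y.1 ⊆ X.1 then g Y else 0 := by
  induction m with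
  | zero =>
    have hsub : ∀ Y : Pset n t, Y.1 ⊆ X.1 ↔ Y = X := fun Y =>
      ⟨fun h => Subtype.ext (eq_of_subset_of_card_le h (X.2.trans Y.2.symm).le),
        fun h => h ▸ subset_rfl⟩
    simp only [RadonIter, hsub, sum_ite_eq', mem_univ, if_true, Nat.factorial_zero,
      Nat.cast_one, one_mul]
  | succ m ih =>
    have hcount : ∀ Y : Pset n t, #{Z : Pset n (t + m) | Y.1 ⊆ Z.1 ∧ Z.1 ⊆ X.1}
        = if Y.1 ⊆ X.1 then m + 1 else 0 := fun Y => by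
      split_ifs with hYX
      · rw [card_pset_between (k := t + m) hYX X.2 (by rw [Y.2]; omega), Y.2]
        omega
      · exact card_eq_zero.2 (filter_false_of_mem fun Z _ h => hYX (h.1.trans h.2))
    calc RadonIter n t (m + 1) g X
        = ∑ Z : Pset n (t + m), ∑ Y : Pset n t,
            if Y.1 ⊆ Z.1 ∧ Z.1 ⊆ X.1 then (m ! : ℂ) * g Y else 0 := by
          rw [RadonIter, Radon]
          refine sum_congr rfl fun Z _ => ?_
          rw [ih, mul_sum]
          split_ifs with hZX <;> simp [hZX]
      _ = ∑ Y : Pset n t, #{Z : Pset n (t + m) | Y.1 ⊆ Z.1 ∧ Z.1 ⊆ X.1} • ((m ! : ℂ) * g Y) := by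
          rw [sum_comm]
          exact sum_congr rfl fun Y _ => by rw [← sum_filter, sum_const]
      _ = (m + 1)! * ∑ Y : Pset n t, if Y.1 ⊆ X.1 then g Y else 0 := by
          rw [mul_sum]
          refine sum_congr rfl fun Y _ => ?_
          rw [hcount]
          split_ifs
          · rw [nsmul_eq_mul, Nat.factorial_succ]
            push_cast
            ring
          · rw [zero_smul, mul_zero]

lemma sum_superset_pset_card_inter {M : Type*} [AddCommMonoid M] {n : ℕ} (Z A : Finset (Fin n))
    (f : ℕ → M) :
    ∑ Y : Pset n (#Z + 1), (if Z ⊆ Y.1 then f #(Y.1 ∩ A) else 0)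
      = #(A \ Z) • f (#(Z ∩ A) + 1) + #(Z ∪ A)ᶜ • f #(Z ∩ A) := by
  rw [sum_pset_eq_sum_powersetCard (fun Y => if Z ⊆ Y then f #(Y ∩ A) else 0), ← sum_filter,
    sum_filter_superset_powersetCard_succ, ← sum_filter_add_sum_filter_not _ (· ∈ A)]
  have hin : {x ∈ Zᶜ | x ∈ A} = A \ Z := by ext x; simp [and_comm]
  have hout : {x ∈ Zᶜ | x ∉ A} = (Z ∪ A)ᶜ := by ext x; simp
  rw [hin, hout, sum_congr rfl fun x hx => ?_, sum_const, sum_congr rfl fun x hx => ?_, sum_const]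
  · rw [mem_compl, mem_union, not_or] at hx
    rw [insert_inter_of_notMem hx.2]
  · rw [mem_sdiff] at hx
    rw [insert_inter_of_mem hx.1, card_insert_of_notMem fun h => hx.2 (mem_inter.1 h).1]

lemma radonIter_card_inter {n t : ℕ} (f : ℕ → ℂ) (A : Finset (Fin n)) (m : ℕ)
    (X : Pset n (t + m)) :
    RadonIter n t m (fun Y => f #(Y.1 ∩ A)) X
      = m ! * ∑ i ∈ range (t + 1), ((#(X.1 ∩ A)).choose i * (#(X.1 \ A)).choose (t - i)) • f i := by
  rw [radonIter_apply, sum_pset_eq_sum_powersetCard (fun Y => if Y ⊆ X.1 then f #(Y ∩ A) else 0),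
    ← sum_filter, filter_subset_univ_powersetCard, sum_powersetCard_card_inter]

/-- `γ_t^k`, with `s = t + m`. -/
noncomputable def gammaCoeff (n t m k : ℕ) : ℂ :=
  ((m + k)! * (n - (t + m) - k)! : ℂ) / ((t + m).choose t * m ! * (n - (t + m))!)

/-- `Φ_t` at a set `X` with `d(X₀, X) = j`. -/
noncomputable def sphericalFun (n t m j : ℕ) : ℂ :=
  ∑ k ∈ Icc (t + j - (t + m)) (min j t),
    (-1 : ℂ) ^ k * ((t + m - j).choose (t - k)) * (j.choose k) * gammaCoeff n t m k

noncomputable def sphericalSeed (n t m i : ℕ) : ℂ :=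
  (-1) ^ (t - i) * gammaCoeff n t m (t - i) / m !

lemma gammaCoeff_succ {n t m k : ℕ} (hk : k + 1 ≤ n - (t + m)) :
    ((n - (t + m) - k : ℕ) : ℂ) * gammaCoeff n t m (k + 1)
      = ((m + k + 1 : ℕ) : ℂ) * gammaCoeff n t m k := by
  have hfac : (n - (t + m) - k)! = (n - (t + m) - k) * (n - (t + m) - (k + 1))! := by
    rw [show n - (t + m) - k = n - (t + m) - (k + 1) + 1 by omega, Nat.factorial_succ]
  rw [gammaCoeff, gammaCoeff, hfac, ← add_assoc, Nat.factorial_succ]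
  push_cast
  ring

lemma sphericalFun_zero (n t m : ℕ) : sphericalFun n t m 0 = 1 := by
  have hC : ((t + m).choose t : ℂ) ≠ 0 := Nat.cast_ne_zero.2 (Nat.choose_pos (by omega)).ne'
  have hm : (m ! : ℂ) ≠ 0 := Nat.cast_ne_zero.2 m.factorial_ne_zero
  have hns : ((n - (t + m))! : ℂ) ≠ 0 := Nat.cast_ne_zero.2 (n - (t + m)).factorial_ne_zero
  rw [sphericalFun, show t + 0 - (t + m) = 0 by omega, Nat.zero_min, Icc_self, sum_singleton,
    gammaCoeff]
  simp only [pow_zero, Nat.sub_zero, Nat.choose_self, Nat.add_zero, Nat.cast_one, one_mul, mul_one]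
  field_simp

lemma sphericalFun_eq_sum_range {n t m a : ℕ} (ha : a ≤ t + m) :
    sphericalFun n t m (t + m - a) = ∑ k ∈ range (t + 1),
      (-1 : ℂ) ^ k * (a.choose (t - k)) * ((t + m - a).choose k) * gammaCoeff n t m k := by
  have hsub : Icc (t + (t + m - a) - (t + m)) (min (t + m - a) t) ⊆ range (t + 1) :=
    fun k hk => by rw [mem_Icc] at hk; rw [mem_range]; omega
  rw [sphericalFun, Nat.sub_sub_self ha]
  refine sum_subset hsub fun k hk hk' => ?_
  rw [mem_range] at hk
  rw [mem_Icc, not_and_or, not_le, not_le] at hk'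
  rcases hk' with hlow | hhigh
  · rw [Nat.choose_eq_zero_of_lt (by omega : a < t - k)]
    simp
  · rw [Nat.choose_eq_zero_of_lt (by omega : t + m - a < k)]
    simp

lemma sum_superset_sphericalSeed_eq_zero {n t m : ℕ} (hn : t + (t + m) ≤ n)
    (A : Finset (Fin n)) (hA : #A = t + m) (Z : Finset (Fin n)) (hZ : #Z + 1 = t) :
    ∑ Y : Pset n t, (if Z ⊆ Y.1 then sphericalSeed n t m #(Y.1 ∩ A) else 0) = 0 := by
  subst hZ
  have hiZ : #(Z ∩ A) ≤ #Z := card_le_card inter_subset_left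
  have hdiff : #(A \ Z) = m + (#Z - #(Z ∩ A)) + 1 := by
    rw [card_sdiff, hA]
    omega
  have hout : #(Z ∪ A)ᶜ = n - (#Z + 1 + m) - (#Z - #(Z ∩ A)) := by
    have := card_union_add_card_inter Z A
    rw [card_compl, Fintype.card_fin]
    omega
  have hseed_succ : sphericalSeed n (#Z + 1) m (#(Z ∩ A) + 1)
      = (-1) ^ (#Z - #(Z ∩ A)) * gammaCoeff n (#Z + 1) m (#Z - #(Z ∩ A)) / m ! := by
    rw [sphericalSeed, show #Z + 1 - (#(Z ∩ A) + 1) = #Z - #(Z ∩ A) by omega]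
  have hseed : sphericalSeed n (#Z + 1) m #(Z ∩ A)
      = (-1) ^ (#Z - #(Z ∩ A) + 1) * gammaCoeff n (#Z + 1) m (#Z - #(Z ∩ A) + 1) / m ! := by
    rw [sphericalSeed, show #Z + 1 - #(Z ∩ A) = #Z - #(Z ∩ A) + 1 by omega]
  rw [sum_superset_pset_card_inter, hdiff, hout, nsmul_eq_mul, nsmul_eq_mul, hseed_succ, hseed]
  linear_combination (-(-1) ^ (#Z - #(Z ∩ A)) / m ! : ℂ) *
    gammaCoeff_succ (n := n) (t := #Z + 1) (m := m) (k := #Z - #(Z ∩ A)) (by omega)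

lemma radonIter_sphericalSeed {n t m : ℕ} (X₀ X : Pset n (t + m)) :
    RadonIter n t m (fun Y => sphericalSeed n t m #(Y.1 ∩ X₀.1)) X
      = sphericalFun n t m (t + m - #(X₀.1 ∩ X.1)) := by
  have ha : #(X.1 ∩ X₀.1) ≤ t + m := (card_le_card inter_subset_left).trans X.2.le
  have hdiff : #(X.1 \ X₀.1) = t + m - #(X.1 ∩ X₀.1) := by
    rw [card_sdiff, X.2, inter_comm]
  rw [radonIter_card_inter, inter_comm X₀.1, sphericalFun_eq_sum_range ha, hdiff, mul_sum,
    ← sum_range_reflect]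
  refine sum_congr rfl fun i hi => ?_
  rw [mem_range] at hi
  rw [sphericalSeed, Nat.add_sub_cancel, Nat.sub_sub_self (by omega : i ≤ t), nsmul_eq_mul]
  have hm : (m ! : ℂ) ≠ 0 := Nat.cast_ne_zero.2 m.factorial_ne_zero
  push_cast
  field_simp

/-- The function `Φ_t(X) = ∑_{k=k₀}^{min(j,t)} (-1)^k C(s-j,t-k) C(j,k) γ_t^k`
(with `j = d(X₀,X)`, `k₀ = max 0 (t+j-s)`,
`γ_t^k = C(s,t)⁻¹ (s-t+k)!(n-s-k)!/((s-t)!(n-s)!)`) is the spherical function of the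
irreducible component `H^t = (R_{s-1}∘⋯∘R_t)(Ker R_{t-1}*)` of `L²(P_s)`:
`Φ_t(X₀) = 1`, `Φ_t` is invariant under the stabilizer of `X₀`, and `Φ_t ∈ H^t`
(here `s = t + m`; for `t = 0` the kernel condition is vacuous and `H^0` is the image
of `L²(P_0)`). -/
theorem stmt8 (n t m : ℕ) (hs : 2 * (t + m) ≤ n) (X₀ : Pset n (t + m)) :
    ∀ Φ : Pset n (t + m) → ℂ,
      (Φ = fun X =>
        ∑ k ∈ Finset.Icc (t + (((t + m) - (X₀.1 ∩ X.1).card)) - (t + m))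
            (min ((t + m) - (X₀.1 ∩ X.1).card) t),
          (-1 : ℂ) ^ k *
            (Nat.choose ((t + m) - ((t + m) - (X₀.1 ∩ X.1).card)) (t - k)) *
            (Nat.choose ((t + m) - (X₀.1 ∩ X.1).card) k) *
            ((Nat.factorial (m + k) * Nat.factorial (n - (t + m) - k) : ℂ) /
              ((Nat.choose (t + m) t) * Nat.factorial m * Nat.factorial (n - (t + m))))) →
      Φ X₀ = 1 ∧
      (∀ σ : Equiv.Perm (Fin n), X₀.1.image ⇑σ = X₀.1 →
        ∀ (X : Pset n (t + m)) (hX : (X.1.image ⇑σ).card = t + m),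
          Φ ⟨X.1.image ⇑σ, hX⟩ = Φ X) ∧
      (∃ h : Pset n t → ℂ,
        (∀ Z : Finset (Fin n), Z.card + 1 = t →
          (∑ Y : Pset n t, if Z ⊆ Y.1 then h Y else 0) = 0) ∧
        Φ = RadonIter n t m h) := by
  intro Φ hΦ
  obtain rfl : Φ = fun X => sphericalFun n t m (t + m - #(X₀.1 ∩ X.1)) := hΦ
  refine ⟨?_, fun σ hσ X hX => ?_, fun Y => sphericalSeed n t m #(Y.1 ∩ X₀.1), fun Z hZ => ?_,
    funext fun X => (radonIter_sphericalSeed X₀ X).symm⟩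
  · simp only [inter_self, X₀.2, Nat.sub_self, sphericalFun_zero]
  · simp only [card_inter_image_perm_of_image_eq hσ]
  · exact sum_superset_sphericalSeed_eq_zero (by omega) X₀.1 X₀.2 Z hZ
end

section
/- The irreducible component H^t of L²(P_s) (for 1 ≤ t ≤ s ≤ n/2) has dimension C(n,t) − C(n,t−1). -/
/-- The Radon transform `R_s : L²(P_s) → L²(P_{s+1})` as a linear map. -/
noncomputable def RadonL (n s : ℕ) : (Pset n s → ℂ) →ₗ[ℂ] (Pset n (s + 1) → ℂ) where
  toFun f X := ∑ Z : Pset n s, (if Z.1 ⊆ X.1 then (1 : ℂ) else 0) * f Z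
  map_add' f g := by
    funext X
    simp [mul_add, Finset.sum_add_distrib]
  map_smul' c f := by
    funext X
    simp [Finset.mul_sum, smul_eq_mul, mul_left_comm]

/-- The adjoint Radon transform `R_s* : L²(P_{s+1}) → L²(P_s)` as a linear map. -/
noncomputable def RadonStarL (n s : ℕ) : (Pset n (s + 1) → ℂ) →ₗ[ℂ] (Pset n s → ℂ) where
  toFun f Z := ∑ X : Pset n (s + 1), (if Z.1 ⊆ X.1 then (1 : ℂ) else 0) * f X
  map_add' f g := by
    funext Z
    simp [mul_add, Finset.sum_add_distrib]
  map_smul' c f := by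
    funext Z
    simp [Finset.mul_sum, smul_eq_mul, mul_left_comm]

/-- The iterated Radon transform `R_{t+m-1} ∘ ⋯ ∘ R_t : L²(P_t) → L²(P_{t+m})`. -/
noncomputable def RadonIterL (n t : ℕ) : (m : ℕ) → (Pset n t → ℂ) →ₗ[ℂ] (Pset n (t + m) → ℂ)
  | 0 => LinearMap.id
  | m + 1 => (RadonL n (t + m)).comp (RadonIterL n t m)


open Finset

lemma ind_mul (a b : Prop) [Decidable a] [Decidable b] :
    (if a then (1:ℂ) else 0) * (if b then (1:ℂ) else 0) = if a ∧ b then (1:ℂ) else 0 := by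
  split_ifs <;> simp_all

lemma sum_sub_ind (n k : ℕ) (W : Finset (Fin n)) :
    ∑ Y : Pset n k, (if Y.1 ⊆ W then (1:ℂ) else 0) = (W.card.choose k : ℂ) := by
  rw [Finset.sum_boole]
  norm_cast
  rw [← Finset.card_powersetCard]
  apply Finset.card_bij (fun Y _ => Y.1)
  · intro Y hY
    simp only [Finset.mem_filter] at hY
    exact Finset.mem_powersetCard.2 ⟨hY.2, Y.2⟩
  · intro Y₁ _ Y₂ _ hh
    exact Subtype.ext hh
  · intro T hT
    rw [Finset.mem_powersetCard] at hT
    exact ⟨⟨T, hT.2⟩, by simp [hT.1], rfl⟩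

lemma sum_sup_ind (n m : ℕ) (W : Finset (Fin n)) (hm : W.card ≤ m) :
    ∑ X : Pset n m, (if W ⊆ X.1 then (1:ℂ) else 0)
      = ((n - W.card).choose (m - W.card) : ℂ) := by
  rw [Finset.sum_boole]
  norm_cast
  have hc : (Wᶜ : Finset (Fin n)).card = n - W.card := by
    simp [Finset.card_compl]
  rw [← hc, ← Finset.card_powersetCard]
  have hdisj : ∀ T ∈ (Wᶜ : Finset (Fin n)).powersetCard (m - W.card), Disjoint T W := by
    intro T hT
    rw [Finset.mem_powersetCard] at hT
    exact Finset.disjoint_left.2 fun a ha => by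
      have := hT.1 ha; simp at this; exact this
  refine Finset.card_bij' (fun X _ => X.1 \ W)
    (fun T hT => ⟨T ∪ W, ?_⟩) ?_ ?_ ?_ ?_
  · rw [Finset.card_union_of_disjoint (hdisj T hT)]
    rw [Finset.mem_powersetCard] at hT
    omega
  · intro X hX
    simp only [Finset.mem_filter] at hX
    rw [Finset.mem_powersetCard]
    refine ⟨fun a ha => ?_, ?_⟩
    · simp only [Finset.mem_sdiff] at ha; simp [ha.2]
    · rw [Finset.card_sdiff_of_subset hX.2, X.2]
  · intro T hT
    simp
  · intro X hX
    simp only [Finset.mem_filter] at hX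
    exact Subtype.ext (Finset.sdiff_union_of_subset hX.2)
  · intro T hT
    exact Finset.union_sdiff_cancel_right (hdisj T hT)

lemma sum_sup_ind_zero (n m : ℕ) (W : Finset (Fin n)) (hm : m < W.card) :
    ∑ X : Pset n m, (if W ⊆ X.1 then (1:ℂ) else 0) = 0 := by
  apply Finset.sum_eq_zero
  intro X _
  rw [if_neg]
  intro hWX
  have := Finset.card_le_card hWX
  omega

/-- Commutation relation `D U = U D + (n - 2(k+1)) id` at level `k+1`. -/
lemma comm_lemma (n k : ℕ) (hn : 2*(k+1) ≤ n) (f : Pset n (k+1) → ℂ) (Z : Pset n (k+1)) :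
    RadonStarL n (k+1) (RadonL n (k+1) f) Z
      = RadonL n k (RadonStarL n k f) Z + ((n:ℂ) - 2*(k+1)) * f Z := by
  have key : ∀ Z' : Pset n (k+1),
      (∑ X : Pset n (k+1+1), (if Z.1 ∪ Z'.1 ⊆ X.1 then (1:ℂ) else 0))
        = ((Z.1 ∩ Z'.1).card.choose k : ℂ)
          + ((n:ℂ) - 2*(k+1)) * (if Z' = Z then 1 else 0) := by
    intro Z'
    have hcards : (Z.1 ∪ Z'.1).card + (Z.1 ∩ Z'.1).card = 2*(k+1) := by
      rw [Finset.card_union_add_card_inter, Z.2, Z'.2]; ring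
    have hW : k+1 ≤ (Z.1 ∪ Z'.1).card := by
      have := Finset.card_le_card (Finset.subset_union_left : Z.1 ⊆ Z.1 ∪ Z'.1)
      rw [Z.2] at this; exact this
    by_cases hZ : Z' = Z
    · subst hZ
      rw [Finset.union_self, Finset.inter_self, Z'.2]
      rw [sum_sup_ind n (k+1+1) Z'.1 (by rw [Z'.2]; omega)]
      rw [Z'.2]
      have h1 : k+1+1 - (k+1) = 1 := by omega
      rw [h1, Nat.choose_one_right, Nat.choose_succ_self_right]
      rw [if_pos rfl]
      push_cast [Nat.cast_sub (by omega : k+1 ≤ n)]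
      ring
    · rw [if_neg hZ]
      have hne : Z.1 ≠ Z'.1 := fun hh => hZ (Subtype.ext hh.symm)
      have hWgt : k+1 < (Z.1 ∪ Z'.1).card := by
        rcases lt_or_eq_of_le hW with h' | h'
        · exact h'
        · exfalso
          have h2 : Z.1 = Z.1 ∪ Z'.1 :=
            Finset.eq_of_subset_of_card_le Finset.subset_union_left (by omega)
          have h3 : Z'.1 ⊆ Z.1 := h2 ▸ Finset.subset_union_right
          exact hne (Finset.eq_of_subset_of_card_le h3 (by rw [Z.2, Z'.2])).symm
      rcases lt_or_eq_of_le (Nat.succ_le_of_lt hWgt) with h' | h'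
      · -- card > k+2
        rw [sum_sup_ind_zero n (k+1+1) _ h']
        have : (Z.1 ∩ Z'.1).card < k := by omega
        rw [Nat.choose_eq_zero_of_lt this]
        simp
      · -- card = k+2
        rw [sum_sup_ind n (k+1+1) _ (le_of_eq h'.symm), ← h']
        have h2 : (Z.1 ∩ Z'.1).card = k := by omega
        simp [h2]
  -- expand both sides
  have hL : RadonStarL n (k+1) (RadonL n (k+1) f) Z
      = ∑ Z' : Pset n (k+1),
          (∑ X : Pset n (k+1+1), (if Z.1 ∪ Z'.1 ⊆ X.1 then (1:ℂ) else 0)) * f Z' := by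
    show (∑ X : Pset n (k+1+1), (if Z.1 ⊆ X.1 then (1:ℂ) else 0) *
        ∑ Z' : Pset n (k+1), (if Z'.1 ⊆ X.1 then (1:ℂ) else 0) * f Z') = _
    simp only [Finset.mul_sum, ← mul_assoc, ind_mul]
    rw [Finset.sum_comm]
    refine Finset.sum_congr rfl fun Z' _ => ?_
    rw [Finset.sum_mul]
    refine Finset.sum_congr rfl fun X _ => ?_
    congr 1
    simp [Finset.union_subset_iff]
  have hR : RadonL n k (RadonStarL n k f) Z
      = ∑ Z' : Pset n (k+1),
          ((Z.1 ∩ Z'.1).card.choose k : ℂ) * f Z' := by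
    show (∑ Y : Pset n k, (if Y.1 ⊆ Z.1 then (1:ℂ) else 0) *
        ∑ Z' : Pset n (k+1), (if Y.1 ⊆ Z'.1 then (1:ℂ) else 0) * f Z') = _
    simp only [Finset.mul_sum, ← mul_assoc, ind_mul]
    rw [Finset.sum_comm]
    refine Finset.sum_congr rfl fun Z' _ => ?_
    have hite : ∀ Y : Pset n k,
        (if Y.1 ⊆ Z.1 ∧ Y.1 ⊆ Z'.1 then (1:ℂ) else 0)
          = (if Y.1 ⊆ Z.1 ∩ Z'.1 then (1:ℂ) else 0) := fun Y => by
      simp [Finset.subset_inter_iff]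
    simp only [hite]
    rw [← Finset.sum_mul, sum_sub_ind]
  rw [hL, hR]
  simp only [key, add_mul, Finset.sum_add_distrib]
  congr 1
  rw [Finset.sum_eq_single Z]
  · simp
  · intro Z' _ hZ'
    simp [hZ']
  · simp

/-- Adjointness: `⟨U f, g⟩ = ⟨f, D g⟩`. -/
lemma adj_lemma (n k : ℕ) (f : Pset n k → ℂ) (g : Pset n (k+1) → ℂ) :
    ∑ X : Pset n (k+1), RadonL n k f X * star (g X)
      = ∑ Z : Pset n k, f Z * star (RadonStarL n k g Z) := by
  show (∑ X : Pset n (k+1),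
      (∑ Z : Pset n k, (if Z.1 ⊆ X.1 then (1:ℂ) else 0) * f Z) * star (g X))
    = ∑ Z : Pset n k, f Z * star (∑ X : Pset n (k+1), (if Z.1 ⊆ X.1 then (1:ℂ) else 0) * g X)
  have step1 : (∑ X : Pset n (k+1),
      (∑ Z : Pset n k, (if Z.1 ⊆ X.1 then (1:ℂ) else 0) * f Z) * star (g X))
      = ∑ X : Pset n (k+1), ∑ Z : Pset n k,
          (if Z.1 ⊆ X.1 then (1:ℂ) else 0) * (f Z * star (g X)) := by
    simp only [Finset.sum_mul, mul_assoc]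
  rw [step1, Finset.sum_comm]
  refine Finset.sum_congr rfl fun Z _ => ?_
  rw [star_sum, Finset.mul_sum]
  refine Finset.sum_congr rfl fun X _ => ?_
  rw [star_mul', show star (if Z.1 ⊆ X.1 then (1:ℂ) else 0)
      = (if Z.1 ⊆ X.1 then (1:ℂ) else 0) from by split_ifs <;> simp]
  ring

/-- `⟨f,f⟩` is a (nonneg) real. -/
lemma inner_self_real {ι : Type*} [Fintype ι] (f : ι → ℂ) :
    ∑ z : ι, f z * star (f z) = ((∑ z : ι, Complex.normSq (f z) : ℝ) : ℂ) := by
  push_cast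
  refine Finset.sum_congr rfl fun z _ => ?_
  rw [show star (f z) = (starRingEnd ℂ) (f z) from rfl, Complex.mul_conj]

/-- `⟨f,f⟩ = 0` implies `f = 0`. -/
lemma inner_self_zero {ι : Type*} [Fintype ι] (f : ι → ℂ)
    (h : ∑ z : ι, Complex.normSq (f z) = 0) : f = 0 := by
  funext z
  have := (Finset.sum_eq_zero_iff_of_nonneg
    (fun i _ => Complex.normSq_nonneg (f i))).1 h z (Finset.mem_univ z)
  simpa using Complex.normSq_eq_zero.1 this

lemma radon_inj (n k : ℕ) (h : 2*k < n) : Function.Injective (RadonL n k) := by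
  suffices h0 : ∀ f, RadonL n k f = 0 → f = 0 by
    intro a b hab
    have := h0 (a - b) (by rw [map_sub, hab, sub_self])
    exact sub_eq_zero.1 this
  intro f hf
  match k, h, f, hf with
  | 0, h, f, hf =>
    haveI : Unique (Pset n 0) :=
      { default := ⟨∅, Finset.card_empty⟩
        uniq := fun a => Subtype.ext (Finset.card_eq_zero.1 a.2) }
    have hX : ({⟨0, by omega⟩} : Finset (Fin n)).card = 1 := Finset.card_singleton _
    have := congrFun hf ⟨_, hX⟩
    have h2 : (∑ Z : Pset n 0,
        (if Z.1 ⊆ ({⟨0, by omega⟩} : Finset (Fin n)) then (1:ℂ) else 0) * f Z) = 0 := this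
    rw [Fintype.sum_unique] at h2
    have hd : ((default : Pset n 0)).1 = ∅ := Finset.card_eq_zero.1 (default : Pset n 0).2
    rw [if_pos (by rw [hd]; exact Finset.empty_subset _), one_mul] at h2
    funext Z
    show f Z = 0
    rw [Unique.eq_default Z]
    exact h2
  | (k+1), h, f, hf =>
    set c' : ℕ := n - 2*(k+1) with hc'
    have hc : ((n:ℂ) - 2*(k+1)) = (c' : ℂ) := by
      rw [hc']; push_cast [Nat.cast_sub (by omega : 2*(k+1) ≤ n)]; ring
    have hDU : RadonStarL n (k+1) (RadonL n (k+1) f) = 0 := by rw [hf, map_zero]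
    have e : ∀ Z, RadonL n k (RadonStarL n k f) Z + (c':ℂ) * f Z = 0 := by
      intro Z
      rw [← hc, ← comm_lemma n k (by omega) f Z, hDU]
      rfl
    have e2 : ∑ Z : Pset n (k+1),
        (RadonL n k (RadonStarL n k f) Z + (c':ℂ) * f Z) * star (f Z) = 0 := by
      simp [e]
    simp only [add_mul, Finset.sum_add_distrib] at e2
    rw [adj_lemma n k (RadonStarL n k f) f] at e2
    simp only [mul_assoc, ← Finset.mul_sum] at e2
    rw [inner_self_real, inner_self_real] at e2
    have e3 : ((∑ z : Pset n k, Complex.normSq (RadonStarL n k f z))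
        + (c':ℝ) * ∑ z : Pset n (k+1), Complex.normSq (f z) : ℝ) = 0 := by
      exact_mod_cast e2
    have hA : (0:ℝ) ≤ ∑ z : Pset n k, Complex.normSq (RadonStarL n k f z) :=
      Finset.sum_nonneg fun z _ => Complex.normSq_nonneg _
    have hB : (0:ℝ) ≤ ∑ z : Pset n (k+1), Complex.normSq (f z) :=
      Finset.sum_nonneg fun z _ => Complex.normSq_nonneg _
    have hcpos : (0:ℝ) < (c' : ℝ) := by
      have : 0 < c' := by omega
      exact_mod_cast this
    have hB0 : ∑ z : Pset n (k+1), Complex.normSq (f z) = 0 := by nlinarith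
    exact inner_self_zero f hB0

lemma radonStar_surj (n u : ℕ) (h : 2*u < n) :
    Function.Surjective (RadonStarL n u) := by
  have hTinj : Function.Injective ((RadonStarL n u).comp (RadonL n u)) := by
    suffices h0 : ∀ f, (RadonStarL n u).comp (RadonL n u) f = 0 → f = 0 by
      intro a b hab
      have := h0 (a - b) (by rw [map_sub, hab, sub_self])
      exact sub_eq_zero.1 this
    intro f hf
    have e : ∑ X : Pset n (u+1), RadonL n u f X * star (RadonL n u f X) = 0 := by
      rw [adj_lemma n u f (RadonL n u f)]
      have : RadonStarL n u (RadonL n u f) = 0 := hf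
      rw [this]
      simp
    rw [inner_self_real] at e
    have e2 : ∑ z : Pset n (u+1), Complex.normSq (RadonL n u f z) = 0 := by
      exact_mod_cast e
    have : RadonL n u f = 0 := inner_self_zero _ e2
    exact radon_inj n u h (by rw [this, map_zero])
  have hTsurj : Function.Surjective ((RadonStarL n u).comp (RadonL n u)) :=
    LinearMap.injective_iff_surjective.1 hTinj
  intro g
  obtain ⟨f, hf⟩ := hTsurj g
  exact ⟨RadonL n u f, hf⟩

lemma iter_inj (n t : ℕ) : ∀ m, 2*(t+m) ≤ n → Function.Injective (RadonIterL n t m)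
  | 0, _ => fun a b hh => by simpa [RadonIterL] using hh
  | m+1, h => by
    have h1 : Function.Injective (RadonL n (t+m)) := radon_inj n (t+m) (by omega)
    have h2 : Function.Injective (RadonIterL n t m) := iter_inj n t m (by omega)
    show Function.Injective ((RadonL n (t+m)).comp (RadonIterL n t m))
    rw [LinearMap.coe_comp]
    exact h1.comp h2

lemma card_pset (n s : ℕ) : Fintype.card (Pset n s) = n.choose s := by
  rw [Fintype.card_finset_len, Fintype.card_fin]


/-- For `1 ≤ t ≤ s ≤ n/2` (here `t = u+1`, `s = t + m`), the irreducible component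
`H^t = (R_{s-1}∘⋯∘R_t)(Ker R_{t-1}*)` of `L²(P_s)` has dimension
`C(n,t) - C(n,t-1)`. -/
theorem stmt10 (n u m : ℕ) (h : 2 * (u + 1 + m) ≤ n) :
    Module.finrank ℂ
        ((LinearMap.ker (RadonStarL n u)).map (RadonIterL n (u + 1) m)) =
      Nat.choose n (u + 1) - Nat.choose n u := by
  have hiter : Function.Injective (RadonIterL n (u+1) m) :=
    iter_inj n (u+1) m (by omega)
  rw [← LinearEquiv.finrank_eq
    (Submodule.equivMapOfInjective (RadonIterL n (u+1) m) hiter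
      (LinearMap.ker (RadonStarL n u)))]
  have hsurj : Function.Surjective (RadonStarL n u) := radonStar_surj n u (by omega)
  have hrn := LinearMap.finrank_range_add_finrank_ker (RadonStarL n u)
  rw [LinearMap.range_eq_top.2 hsurj, finrank_top] at hrn
  have hd1 : Module.finrank ℂ (Pset n u → ℂ) = n.choose u := by
    rw [Module.finrank_fintype_fun_eq_card, card_pset]
  have hd2 : Module.finrank ℂ (Pset n (u+1) → ℂ) = n.choose (u+1) := by
    rw [Module.finrank_fintype_fun_eq_card, card_pset]
  rw [hd1, hd2] at hrn
  omega
end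

section
/- Let W = W₁ ⊕ W₂ be a subspace of F_q^n. The number of k-dimensional subspaces Z of W with dim(Z ∩ W₁) = 0 equals q^{(dim W₁)·k} · [dim W₂ choose k]_q. -/
/-!
Write `W = W₂ ⊕ W₁`. A subspace `Z ≤ W` with `Z ⊓ W₁ = ⊥` is the graph of a unique linear map
`f : U → W₁` defined on its projection `U ≤ W₂`, and `dim U = dim Z`; conversely every such pair
`(U, f)` gives one. So the count is the number of `k`-dimensional `U ≤ W₂`, times `q ^ (k dim W₁)`
choices of `f`. The number of `k`-dimensional subspaces of a `d`-dimensional space is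
`[d choose k]_q`: counting independent `k`-tuples by their span, each such subspace is spanned by
`∏_{i<k} (q^k - q^i)` of the `∏_{i<k} (q^d - q^i)` independent `k`-tuples.
-/

open Module

/-- The `q`-factorial `a!_q = ∏_{k=1}^a (q^k - 1)/(q - 1)`. -/
noncomputable def qFact (q : ℚ) (a : ℕ) : ℚ := ∏ k ∈ Finset.range a, (q ^ (k + 1) - 1) / (q - 1)

/-- The Gaussian binomial coefficient `[a choose b]_q = a!_q / (b!_q (a-b)!_q)`
(and `0` when `b > a`). -/
noncomputable def qChoose (q : ℚ) (a b : ℕ) : ℚ :=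
  if b ≤ a then qFact q a / (qFact q b * qFact q (a - b)) else 0

open Finset

section GaussianBinomial

lemma qFact_succ (q : ℚ) (a : ℕ) :
    qFact q (a + 1) = qFact q a * ((q ^ (a + 1) - 1) / (q - 1)) :=
  prod_range_succ _ _

lemma qFact_ne_zero {q : ℚ} (hq : 1 < q) (a : ℕ) : qFact q a ≠ 0 :=
  prod_ne_zero_iff.mpr fun j _ ↦
    div_ne_zero (sub_ne_zero.mpr (one_lt_pow₀ hq j.succ_ne_zero).ne') (sub_ne_zero.mpr hq.ne')

lemma prod_pow_sub_pow_mul_qFact {q : ℚ} (hq : q ≠ 1) {k m : ℕ} (hkm : k ≤ m) :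
    (∏ i ∈ range k, (q ^ m - q ^ i)) * qFact q (m - k) =
      (∏ i ∈ range k, q ^ i) * (q - 1) ^ k * qFact q m := by
  induction k with
  | zero => simp
  | succ k ih =>
    have hmk : m - k = m - (k + 1) + 1 := by omega
    have hsplit : q ^ m - q ^ k = q ^ k * (q - 1) * ((q ^ (m - (k + 1) + 1) - 1) / (q - 1)) := by
      rw [mul_assoc, mul_div_cancel₀ _ (sub_ne_zero.mpr hq), mul_sub, mul_one, ← pow_add, ← hmk,
        Nat.add_sub_cancel' (by omega)]
    rw [hmk, qFact_succ] at ih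
    rw [prod_range_succ, prod_range_succ, hsplit]
    linear_combination (q ^ k * (q - 1)) * ih (by omega)

lemma qChoose_mul_prod_pow_sub_pow {q : ℚ} (hq : 1 < q) {d k : ℕ} (hkd : k ≤ d) :
    qChoose q d k * ∏ i ∈ range k, (q ^ k - q ^ i) = ∏ i ∈ range k, (q ^ d - q ^ i) := by
  have hk := prod_pow_sub_pow_mul_qFact hq.ne' (le_refl k)
  rw [Nat.sub_self, qFact, prod_range_zero, mul_one] at hk
  rw [qChoose, if_pos hkd, hk]
  refine mul_right_cancel₀ (qFact_ne_zero hq (d - k)) ?_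
  rw [prod_pow_sub_pow_mul_qFact hq.ne' hkd]
  field_simp [qFact_ne_zero hq]

lemma natCast_prod_pow_sub_pow {q k m : ℕ} (hq : 1 ≤ q) (hkm : k ≤ m) :
    ((∏ i : Fin k, (q ^ m - q ^ (i : ℕ)) : ℕ) : ℚ) = ∏ i ∈ range k, ((q : ℚ) ^ m - (q : ℚ) ^ i) := by
  rw [Fin.prod_univ_eq_prod_range (fun i ↦ q ^ m - q ^ i), Nat.cast_prod]
  refine prod_congr rfl fun i hi ↦ ?_
  rw [Nat.cast_sub (Nat.pow_le_pow_right hq ((mem_range.mp hi).le.trans hkm)), Nat.cast_pow, Nat.cast_pow]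

end GaussianBinomial

lemma Nat.card_sigma_of_card_eq {α : Type*} [Finite α] {β : α → Type*} [∀ a, Finite (β a)]
    {c : ℕ} (h : ∀ a, Nat.card (β a) = c) : Nat.card (Σ a, β a) = Nat.card α * c := by
  have := Fintype.ofFinite α
  rw [Nat.card_sigma, sum_congr rfl fun a _ ↦ h a, sum_const, Finset.card_univ, smul_eq_mul,
    Nat.card_eq_fintype_card]

section Grassmannian

variable {K V : Type*} [Field K] [Fintype K] [AddCommGroup V] [Module K V]

def linearIndependentSpanEquiv {k : ℕ} (Z : Submodule K V) [FiniteDimensional K Z]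
    (hZ : finrank K Z = k) :
    {s : {s : Fin k → V // LinearIndependent K s} // Submodule.span K (Set.range s.1) = Z} ≃
      {w : Fin k → Z // LinearIndependent K w} where
  toFun s := ⟨fun i ↦ ⟨s.1.1 i, s.2.le (Submodule.subset_span (Set.mem_range_self i))⟩,
    .of_comp Z.subtype s.1.2⟩
  invFun w := ⟨⟨Z.subtype ∘ w.1, w.2.map' _ Z.ker_subtype⟩, by
    rw [Set.range_comp, ← Submodule.map_span,
      w.2.span_eq_top_of_card_eq_finrank' (by rw [Fintype.card_fin, hZ]), Submodule.map_top,
      Submodule.range_subtype]⟩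
  left_inv _ := rfl
  right_inv _ := rfl

lemma card_finrank_eq_mul_prod [Finite V] (k : ℕ) :
    Nat.card {Z : Submodule K V // finrank K Z = k} *
        ∏ i : Fin k, (Fintype.card K ^ k - Fintype.card K ^ (i : ℕ)) =
      Nat.card {s : Fin k → V // LinearIndependent K s} := by
  let span : {s : Fin k → V // LinearIndependent K s} → {Z : Submodule K V // finrank K Z = k} :=
    fun s ↦ ⟨Submodule.span K (Set.range s.1), by rw [finrank_span_eq_card s.2, Fintype.card_fin]⟩
  rw [← Nat.card_congr (Equiv.sigmaFiberEquiv span)]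
  refine (Nat.card_sigma_of_card_eq fun Z ↦ ?_).symm
  have hZ := card_linearIndependent (K := K) (V := Z.1) Z.2.ge
  rw [Z.2] at hZ
  rw [← hZ, ← Nat.card_congr (linearIndependentSpanEquiv Z.1 Z.2)]
  exact Nat.card_congr (Equiv.subtypeEquivRight fun s ↦ Subtype.ext_iff)

lemma card_finrank_eq_qChoose [Finite V] (k : ℕ) :
    (Nat.card {Z : Submodule K V // finrank K Z = k} : ℚ) =
      qChoose (Fintype.card K) (finrank K V) k := by
  have hq : 1 < Fintype.card K := Fintype.one_lt_card
  have hq' : (1 : ℚ) < Fintype.card K := by exact_mod_cast hq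
  rcases le_or_gt k (finrank K V) with hk | hk
  · have hprod : ∏ i ∈ range k, ((Fintype.card K : ℚ) ^ k - (Fintype.card K : ℚ) ^ i) ≠ 0 :=
      prod_ne_zero_iff.mpr fun i hi ↦
        sub_ne_zero.mpr (pow_lt_pow_right₀ hq' (mem_range.mp hi)).ne'
    refine mul_right_cancel₀ hprod ?_
    rw [qChoose_mul_prod_pow_sub_pow hq' hk, ← natCast_prod_pow_sub_pow hq.le le_rfl,
      ← Nat.cast_mul, card_finrank_eq_mul_prod, card_linearIndependent hk,
      natCast_prod_pow_sub_pow hq.le hk]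
  · rw [qChoose, if_neg hk.not_ge, Nat.cast_eq_zero, Nat.card_eq_zero]
    exact .inl ⟨fun Z ↦ hk.not_ge (Z.2 ▸ Submodule.finrank_le Z.1)⟩

end Grassmannian

section Graph

variable {K E F : Type*} [Field K] [AddCommGroup E] [Module K E] [AddCommGroup F] [Module K F]

lemma LinearPMap.finrank_graph (f : E →ₗ.[K] F) : finrank K f.graph = finrank K f.domain := by
  have hinj : Function.Injective (f.domain.subtype.prod f.toFun) :=
    fun x y h ↦ Subtype.ext (congrArg Prod.fst h)
  have hrange : f.graph = LinearMap.range (f.domain.subtype.prod f.toFun) := by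
    ext x
    exact f.mem_graph_iff'
  rw [hrange, LinearMap.finrank_range_of_inj hinj]

variable (K E F) in
def LinearPMap.equivSigma : (E →ₗ.[K] F) ≃ Σ U : Submodule K E, U →ₗ[K] F where
  toFun f := ⟨f.domain, f.toFun⟩
  invFun f := ⟨f.1, f.2⟩
  left_inv _ := rfl
  right_inv _ := rfl

noncomputable def Submodule.toLinearPMapEquiv :
    {g : Submodule K (E × F) // ∀ x ∈ g, x.1 = 0 → x.2 = 0} ≃ (E →ₗ.[K] F) where
  toFun g := g.1.toLinearPMap
  invFun f := ⟨f.graph, fun _ hx ↦ f.graph_fst_eq_zero_snd hx⟩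
  left_inv g := Subtype.ext (g.1.toLinearPMap_graph_eq g.2)
  right_inv f := LinearPMap.eq_of_eq_graph <|
    f.graph.toLinearPMap_graph_eq fun _ hx ↦ f.graph_fst_eq_zero_snd hx

lemma card_graph_finrank_eq [Fintype K] [Finite E] [Finite F] (k : ℕ) :
    Nat.card {g : Submodule K (E × F) // (∀ x ∈ g, x.1 = 0 → x.2 = 0) ∧ finrank K g = k} =
      Nat.card {U : Submodule K E // finrank K U = k} * Fintype.card K ^ (finrank K F * k) := by
  have : ∀ U : Submodule K E, Finite (U →ₗ[K] F) := fun _ ↦ Module.finite_of_finite K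
  let e : {g : Submodule K (E × F) // (∀ x ∈ g, x.1 = 0 → x.2 = 0) ∧ finrank K g = k} ≃
      Σ U : {U : Submodule K E // finrank K U = k}, (U.1 →ₗ[K] F) :=
    (Equiv.subtypeSubtypeEquivSubtypeInter
      (fun g : Submodule K (E × F) ↦ ∀ x ∈ g, x.1 = 0 → x.2 = 0) (fun g ↦ finrank K g = k)).symm.trans <|
    (Submodule.toLinearPMapEquiv.subtypeEquiv (q := fun f ↦ finrank K f.domain = k) fun g ↦ by
      rw [← LinearPMap.finrank_graph]
      change _ ↔ finrank K g.1.toLinearPMap.graph = k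
      rw [g.1.toLinearPMap_graph_eq g.2]).trans <|
    ((LinearPMap.equivSigma K E F).subtypeEquiv (q := fun U ↦ finrank K U.1 = k)
      fun _ ↦ Iff.rfl).trans <|
    Equiv.subtypeSigmaEquiv (fun U : Submodule K E ↦ U →ₗ[K] F) (fun U ↦ finrank K U = k)
  rw [Nat.card_congr e, Nat.card_sigma_of_card_eq fun U ↦ ?_]
  rw [Module.natCard_eq_pow_finrank (K := K), finrank_linearMap, U.2, mul_comm,
    Nat.card_eq_fintype_card]

end Graph

section Embedding

variable {K M N : Type*} [Field K] [AddCommGroup M] [Module K M] [AddCommGroup N] [Module K N]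

lemma Submodule.card_le_range_of_injective {f : M →ₗ[K] N} (hf : Function.Injective f)
    (P : Submodule K N → Prop) :
    Nat.card {Z : Submodule K N // Z ≤ LinearMap.range f ∧ P Z} =
      Nat.card {G : Submodule K M // P (G.map f)} :=
  Nat.card_congr
    { toFun Z := ⟨Z.1.comap f, by rw [Submodule.map_comap_eq_of_le Z.2.1]; exact Z.2.2⟩
      invFun G := ⟨G.1.map f, LinearMap.map_le_range, G.2⟩
      left_inv Z := Subtype.ext (Submodule.map_comap_eq_of_le Z.2.1)
      right_inv G := Subtype.ext (Submodule.comap_map_eq_of_injective hf G.1) }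

lemma Submodule.coprod_subtype_injective {V₁ V₂ : Submodule K N} (h : Disjoint V₁ V₂) :
    Function.Injective (V₁.subtype.coprod V₂.subtype) := by
  rw [← LinearMap.ker_eq_bot, LinearMap.ker_coprod_of_disjoint_range, Submodule.ker_subtype,
    Submodule.ker_subtype, Submodule.prod_bot]
  rwa [Submodule.range_subtype, Submodule.range_subtype]

lemma Submodule.map_coprod_subtype_inf_eq_bot_iff {V₁ V₂ : Submodule K N} (h : Disjoint V₂ V₁)
    (G : Submodule K (V₂ × V₁)) :
    G.map (V₂.subtype.coprod V₁.subtype) ⊓ V₁ = ⊥ ↔ ∀ x ∈ G, x.1 = 0 → x.2 = 0 := by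
  simp only [Submodule.eq_bot_iff, Submodule.mem_inf, Submodule.mem_map, and_imp,
    forall_exists_index, LinearMap.coprod_apply, Submodule.subtype_apply]
  constructor
  · intro H x hx h1
    simpa [h1] using H _ x hx rfl (by simp [h1])
  · rintro H _ x hx rfl hz
    have h1 : x.1 = 0 := Subtype.ext <|
      Submodule.disjoint_def.mp h _ x.1.2 ((add_mem_cancel_right x.2.2).mp hz)
    simp [h1, H x hx h1]

end Embedding

/-- Let `W = W₁ ⊕ W₂` be a subspace of `F_q^n`.  The number of `k`-dimensional
subspaces `Z` of `W` with `dim (Z ∩ W₁) = 0` (i.e. `ℓ_q(Z,W₁) = k`) equals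
`q^(dim W₁ · k) · [dim W₂ choose k]_q`. -/
theorem stmt13 (q n k : ℕ) (F : Type) [Field F] [Fintype F] (hF : Fintype.card F = q)
    (W W₁ W₂ : Submodule F (Fin n → F))
    (hdisj : W₁ ⊓ W₂ = ⊥) (hsup : W₁ ⊔ W₂ = W) :
    (Nat.card {Z : Submodule F (Fin n → F) //
        Z ≤ W ∧ finrank F Z = k ∧ finrank F ↥(Z ⊓ W₁) = 0} : ℚ) =
      (q : ℚ) ^ (finrank F W₁ * k) * qChoose q (finrank F W₂) k := by
  subst hF hsup
  have hdisj' : Disjoint W₂ W₁ := (disjoint_iff.mpr hdisj).symm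
  have hφ := Submodule.coprod_subtype_injective hdisj'
  rw [sup_comm, Submodule.sup_eq_range, Submodule.card_le_range_of_injective hφ]
  have hgraph : ∀ G : Submodule F (W₂ × W₁),
      (finrank F (G.map (W₂.subtype.coprod W₁.subtype)) = k ∧
        finrank F ↥(G.map (W₂.subtype.coprod W₁.subtype) ⊓ W₁) = 0) ↔
      (∀ x ∈ G, x.1 = 0 → x.2 = 0) ∧ finrank F G = k := fun G ↦ by
    rw [(Submodule.equivMapOfInjective _ hφ G).finrank_eq.symm, Submodule.finrank_eq_zero,
      Submodule.map_coprod_subtype_inf_eq_bot_iff hdisj', and_comm]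
  rw [Nat.card_congr (Equiv.subtypeEquivRight hgraph), card_graph_finrank_eq, Nat.cast_mul,
    card_finrank_eq_qChoose]
  push_cast
  ring
end

section
/- For 1 ≤ s ≤ n/2, the operator C(q)_s* : L²(V_{n−s}) → L²(V_s) defined by C(q)_s*(f)(W) = Σ_{W' ⊕ W = V} f(W') is a GL_n(q)-intertwining operator and satisfies C(q)_s* ∘ R(q)_{n−s}* = q^{(n−s)−(s−1)} · (R(q)_{s−1} ∘ C(q)_{s−1}*). -/
open Module

/-- The operator `C(q)_s* : L²(V_{n-s}) → L²(V_s)`,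
`C(q)_s* f W = ∑_{W' ⊕ W = V} f W'`. -/
noncomputable def Cstar (F : Type) [Field F] (n s : ℕ)
    (f : Submodule F (Fin n → F) → ℂ) (W : Submodule F (Fin n → F)) : ℂ :=
  ∑ᶠ W' ∈ {W' : Submodule F (Fin n → F) | finrank F W' = n - s ∧ IsCompl W' W}, f W'

/-- The `q`-Radon transform `R(q)_m : L²(V_m) → L²(V_{m+1})`,
`(R(q)_m f) Y = ∑_{Z ⊂ Y, dim Z = m} f Z`. -/
noncomputable def RUp (F : Type) [Field F] (n m : ℕ)
    (f : Submodule F (Fin n → F) → ℂ) (Y : Submodule F (Fin n → F)) : ℂ :=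
  ∑ᶠ Z ∈ {Z : Submodule F (Fin n → F) | Z ≤ Y ∧ finrank F Z = m}, f Z

/-- The adjoint `q`-Radon transform `(R(q)* f) Y = ∑_{Z' ⊃ Y, dim Z' = m} f Z'`. -/
noncomputable def RStar (F : Type) [Field F] (n m : ℕ)
    (f : Submodule F (Fin n → F) → ℂ) (Y : Submodule F (Fin n → F)) : ℂ :=
  ∑ᶠ Z' ∈ {Z' : Submodule F (Fin n → F) | Y ≤ Z' ∧ finrank F Z' = m}, f Z'

/-! Both sides are sums of `f Z'` over the `(n - s + 1)`-dimensional `Z'` with `Z' + W = V`,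
weighted by numbers of complements. For such `Z'` the intersection `L = Z' ⊓ W` is a line, and by
the modular law a subspace `X ≤ Z'` complements `W` iff it complements `L` inside `Z'`; likewise
`Z ≤ W` complements `Z'` iff it complements `L` inside `W`. The complements of a `k`-dimensional
subspace of an `m`-dimensional space are the graphs of the linear maps from a fixed complement to
it, so there are `q^((m-k)k)` of them: this gives the weight `q^(n-s)` on the left and `q^(s-1)` on
the right. Intertwining is the reindexing `W' ↦ g W'`. -/

section
variable {α : Type*} [Lattice α] [BoundedOrder α] [IsModularLattice α]

theorem isCompl_iff_isCompl_Iic_inf {a b x : α} (hx : x ≤ a) (hab : Codisjoint a b) :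
    IsCompl x b ↔ IsCompl (⟨x, hx⟩ : Set.Iic a) ⟨a ⊓ b, inf_le_left⟩ := by
  rw [Set.Iic.isCompl_iff]
  dsimp only
  constructor
  · intro h
    refine ⟨h.disjoint.mono_right inf_le_right, ?_⟩
    rw [inf_comm, ← sup_inf_assoc_of_le b hx, h.codisjoint.eq_top, top_inf_eq]
  · rintro ⟨hdisj, hsup⟩
    constructor
    · rw [disjoint_iff, ← inf_eq_left.mpr hx, inf_assoc]
      exact disjoint_iff.mp hdisj
    · rw [codisjoint_iff, eq_top_iff, ← hab.eq_top]
      exact sup_le (hsup ▸ sup_le le_sup_left (inf_le_right.trans le_sup_right)) le_sup_right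

end

namespace Submodule

variable {F M : Type*} [Field F] [AddCommGroup M] [Module F M]

noncomputable def isComplEquivLinearMap (p q₀ : Submodule F M) (h : IsCompl p q₀) :
    {q // IsCompl p q} ≃ (q₀ →ₗ[F] p) :=
  p.isComplEquivProj.trans
  { toFun f := (f : M →ₗ[F] p).domRestrict q₀
    invFun g := ⟨p.projectionOnto q₀ h + g ∘ₗ q₀.projectionOnto p h.symm,
      fun x => by
        simp [projectionOnto_apply_left h x, projectionOnto_apply_of_mem_right h.symm x.2]⟩
    left_inv f := by
      ext x
      obtain ⟨f, hf⟩ := f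
      simp only [LinearMap.add_apply, LinearMap.coe_comp, Function.comp_apply,
        LinearMap.domRestrict_apply]
      conv_rhs => rw [← projection_add_projection_eq_self h x]
      rw [map_add, projection_apply, projection_apply, hf]
    right_inv g := by
      ext y
      simp [projectionOnto_apply_of_mem_right h y.2, projectionOnto_apply_left h.symm y] }

variable [FiniteDimensional F M]

theorem natCard_isCompl (p : Submodule F M) :
    Nat.card {q // IsCompl p q} = Nat.card F ^ ((finrank F M - finrank F p) * finrank F p) := by
  obtain ⟨q₀, hq₀⟩ := p.exists_isCompl
  rw [Nat.card_congr (p.isComplEquivLinearMap q₀ hq₀), Module.natCard_eq_pow_finrank (K := F),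
    Module.finrank_linearMap, ← finrank_add_eq_of_isCompl hq₀, Nat.add_sub_cancel_left]

theorem natCard_isCompl_Iic (a : Submodule F M) (c : Set.Iic a) :
    Nat.card {x : Set.Iic a // IsCompl x c} =
      Nat.card F ^ ((finrank F a - finrank F c) * finrank F c) := by
  have e : {x : Set.Iic a // IsCompl x c} ≃ {y : Submodule F a // IsCompl (a.mapIic.symm c) y} :=
    a.mapIic.symm.toEquiv.subtypeEquiv fun x => by
      rw [isCompl_comm]; exact a.mapIic.symm.isCompl_iff
  have hc : finrank F (a.mapIic.symm c) = finrank F c := by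
    conv_rhs => rw [← a.mapIic.apply_symm_apply c, coe_mapIic_apply]
    exact (finrank_map_subtype_eq _ _).symm
  rw [Nat.card_congr e, natCard_isCompl, hc]

theorem natCard_le_isCompl {a b : Submodule F M} (hab : Codisjoint a b) :
    Nat.card {x // x ≤ a ∧ IsCompl x b} =
      Nat.card F ^ ((finrank F a - finrank F ↥(a ⊓ b)) * finrank F ↥(a ⊓ b)) := by
  let e : {x // x ≤ a ∧ IsCompl x b} ≃
      {y : Set.Iic a // IsCompl y ⟨a ⊓ b, (inf_le_left : a ⊓ b ≤ a)⟩} :=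
    { toFun x := ⟨⟨x, x.2.1⟩, (isCompl_iff_isCompl_Iic_inf x.2.1 hab).mp x.2.2⟩
      invFun y := ⟨y.1, y.1.2, (isCompl_iff_isCompl_Iic_inf y.1.2 hab).mpr y.2⟩ }
  rw [Nat.card_congr e, natCard_isCompl_Iic]

theorem finrank_eq_sub_of_isCompl {p q : Submodule F M} (h : IsCompl p q) :
    finrank F p = finrank F M - finrank F q := by
  have := finrank_add_eq_of_isCompl h
  omega

theorem finrank_inf_add_finrank_of_codisjoint {a b : Submodule F M} (hab : Codisjoint a b) :
    finrank F ↥(a ⊓ b) + finrank F M = finrank F a + finrank F b := by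
  rw [← finrank_sup_add_finrank_inf_eq, hab.eq_top, finrank_top, add_comm]

end Submodule

theorem finsum_mem_finsum_mem_eq_nsmul {α β N : Type*} [Finite α] [Finite β] [AddCommMonoid N]
    {S : Set α} {T : α → Set β} {U : Set β} {c : ℕ} (f : β → N) (hTU : ∀ a ∈ S, T a ⊆ U)
    (hcard : ∀ b ∈ U, Nat.card {a // a ∈ S ∧ b ∈ T a} = c) :
    ∑ᶠ a ∈ S, ∑ᶠ b ∈ T a, f b = c • ∑ᶠ b ∈ U, f b := by
  classical
  have := Fintype.ofFinite α
  have := Fintype.ofFinite β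
  simp only [finsum_mem_eq_toFinset_sum]
  rw [Finset.sum_comm' (t' := U.toFinset) (s' := fun b => {a | a ∈ S ∧ b ∈ T a}.toFinset),
    Finset.smul_sum]
  · refine Finset.sum_congr rfl fun b hb => ?_
    rw [Finset.sum_const, ← hcard b (Set.mem_toFinset.mp hb), Set.toFinset_card,
      ← Nat.card_eq_fintype_card]
    rfl
  · intro a b
    simp only [Set.mem_toFinset, Set.mem_ofPred_eq]
    exact ⟨fun ⟨ha, hb⟩ => ⟨⟨ha, hb⟩, hTU a ha hb⟩, fun ⟨h, _⟩ => h⟩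

section
variable {F : Type} [Field F] {n s : ℕ}

theorem Cstar_comp_map (e : (Fin n → F) ≃ₗ[F] (Fin n → F)) (f : Submodule F (Fin n → F) → ℂ)
    (W : Submodule F (Fin n → F)) :
    Cstar F n s (fun U => f (U.map (e : (Fin n → F) →ₗ[F] (Fin n → F)))) W =
      Cstar F n s f (W.map (e : (Fin n → F) →ₗ[F] (Fin n → F))) :=
  finsum_mem_eq_of_bijOn (Submodule.orderIsoMapComap e)
    ((Submodule.orderIsoMapComap e).toEquiv.bijOn fun U => by
      change finrank F (Submodule.orderIsoMapComap e U) = n - s ∧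
          IsCompl (Submodule.orderIsoMapComap e U) (Submodule.orderIsoMapComap e W) ↔ _
      rw [← OrderIso.isCompl_iff, Submodule.orderIsoMapComap_apply, LinearEquiv.finrank_map_eq]
      rfl)
    fun _ _ => rfl

variable [Finite F]

theorem Cstar_RStar (f : Submodule F (Fin n → F) → ℂ) {W : Submodule F (Fin n → F)}
    (hW : finrank F W = s) :
    Cstar F n s (RStar F n (n - s + 1) f) W =
      Nat.card F ^ (n - s) •
        ∑ᶠ Z' ∈ {Z' : Submodule F (Fin n → F) | finrank F Z' = n - s + 1 ∧ Codisjoint Z' W},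
          f Z' := by
  have hsn : s ≤ n := hW ▸ (Submodule.finrank_le W).trans_eq (finrank_fin_fun F)
  refine finsum_mem_finsum_mem_eq_nsmul f
    (fun W' hW' Z' hZ' => ⟨hZ'.2, hW'.2.codisjoint.mono_left hZ'.1⟩) fun Z' ⟨hZ', hZ'W⟩ => ?_
  have hcompl (W' : Submodule F (Fin n → F)) :
      (finrank F W' = n - s ∧ IsCompl W' W) ∧ W' ≤ Z' ∧ finrank F Z' = n - s + 1 ↔
        W' ≤ Z' ∧ IsCompl W' W :=
    ⟨fun h => ⟨h.2.1, h.1.2⟩, fun h =>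
      ⟨⟨by rw [Submodule.finrank_eq_sub_of_isCompl h.2, finrank_fin_fun, hW], h.2⟩, h.1, hZ'⟩⟩
  have hline : finrank F ↥(Z' ⊓ W) = 1 := by
    have := Submodule.finrank_inf_add_finrank_of_codisjoint hZ'W
    rw [finrank_fin_fun] at this
    omega
  refine (Nat.card_congr (Equiv.subtypeEquivRight hcompl)).trans ?_
  rw [Submodule.natCard_le_isCompl hZ'W, hline, hZ', mul_one, Nat.add_sub_cancel]

theorem RUp_Cstar (hs : 1 ≤ s) (f : Submodule F (Fin n → F) → ℂ) {W : Submodule F (Fin n → F)}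
    (hW : finrank F W = s) :
    RUp F n (s - 1) (Cstar F n (s - 1) f) W =
      Nat.card F ^ (s - 1) •
        ∑ᶠ Z' ∈ {Z' : Submodule F (Fin n → F) | finrank F Z' = n - s + 1 ∧ Codisjoint Z' W},
          f Z' := by
  have hsn : s ≤ n := hW ▸ (Submodule.finrank_le W).trans_eq (finrank_fin_fun F)
  refine finsum_mem_finsum_mem_eq_nsmul f
    (fun Z hZ U ⟨hU, hUZ⟩ => ⟨by omega, hUZ.codisjoint.mono_right hZ.1⟩) fun Z' ⟨hZ', hZ'W⟩ => ?_
  have hcompl (Z : Submodule F (Fin n → F)) :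
      (Z ≤ W ∧ finrank F Z = s - 1) ∧ finrank F Z' = n - (s - 1) ∧ IsCompl Z' Z ↔
        Z ≤ W ∧ IsCompl Z Z' :=
    ⟨fun h => ⟨h.1.1, h.2.2.symm⟩, fun h =>
      ⟨⟨h.1, by rw [Submodule.finrank_eq_sub_of_isCompl h.2, finrank_fin_fun, hZ']; omega⟩,
        by omega, h.2.symm⟩⟩
  have hline : finrank F ↥(W ⊓ Z') = 1 := by
    have := Submodule.finrank_inf_add_finrank_of_codisjoint hZ'W.symm
    rw [finrank_fin_fun] at this
    omega
  refine (Nat.card_congr (Equiv.subtypeEquivRight hcompl)).trans ?_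
  rw [Submodule.natCard_le_isCompl hZ'W.symm, hline, hW, mul_one]

end

/-- For `1 ≤ s ≤ n/2`, `C(q)_s*` is a `GL_n(q)`-intertwining operator and
`C(q)_s* ∘ R(q)_{n-s}* = q^((n-s)-(s-1)) · (R(q)_{s-1} ∘ C(q)_{s-1}*)`. -/
theorem stmt18 (q n s : ℕ) (F : Type) [Field F] [Fintype F] (hF : Fintype.card F = q)
    (hs : 1 ≤ s) (hsn : 2 * s ≤ n) :
    (∀ (g : (Fin n → F) ≃ₗ[F] (Fin n → F)) (f : Submodule F (Fin n → F) → ℂ)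
        (W : Submodule F (Fin n → F)), finrank F W = s →
      Cstar F n s (fun U => f (U.map (g.symm : (Fin n → F) →ₗ[F] (Fin n → F)))) W =
        Cstar F n s f (W.map (g.symm : (Fin n → F) →ₗ[F] (Fin n → F)))) ∧
    (∀ (f : Submodule F (Fin n → F) → ℂ) (W : Submodule F (Fin n → F)),
      finrank F W = s →
        Cstar F n s (RStar F n (n - s + 1) f) W =
          (q : ℂ) ^ ((n - s) - (s - 1)) * RUp F n (s - 1) (Cstar F n (s - 1) f) W) := by
  refine ⟨fun g f W _ => Cstar_comp_map g.symm f W, fun f W hW => ?_⟩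
  rw [Cstar_RStar f hW, RUp_Cstar hs f hW, nsmul_eq_mul, nsmul_eq_mul,
    ← mul_assoc, Nat.card_eq_fintype_card, hF]
  push_cast
  rw [← pow_add, Nat.sub_add_cancel (by omega)]
end

section
/- For 1 ≤ s ≤ n/2 and any h ∈ L²(V_{n−s}) with Σ_{Y' ⊂ Z', dim Y' = n−s} h(Y') = 0 for every (n−s+1)-dimensional subspace Z' (i.e., h ∈ Ker R(q)_{n−s}), the function C(q)_s*(h)(W) = Σ_{W' ⊕ W = V} h(W') lies in Ker R(q)_{s−1}*, i.e., for every Z ∈ V_{s−1}: Σ_{Y ⊃ Z, dim Y = s} Σ_{Y' ⊕ Y = V} h(Y') = 0. -/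
open Module

lemma my_finite_submodule (F : Type) [Field F] [Fintype F] (n : ℕ) :
    Finite (Submodule F (Fin n → F)) :=
  Finite.of_injective (fun U : Submodule F (Fin n → F) => (U : Set (Fin n → F)))
    SetLike.coe_injective

/-- Key incidence lemma: if `W ⊓ W' = ⊥`, `W ≤ U`, `dim U = dim W + 1`, then
`U ⊓ W' = ⊥ ↔ ¬ U ≤ W ⊔ W'`. -/
lemma lemA {F : Type} [Field F] [Fintype F] {n : ℕ} (W W' U : Submodule F (Fin n → F))
    (hWW' : W ⊓ W' = ⊥) (hWU : W ≤ U) (hU : finrank F U = finrank F W + 1) :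
    U ⊓ W' = ⊥ ↔ ¬ U ≤ W ⊔ W' := by
  constructor
  · intro hinf hle
    have hlt : W < U := lt_of_le_of_ne hWU (by rintro rfl; omega)
    obtain ⟨u, huU, huW⟩ := SetLike.exists_of_lt hlt
    obtain ⟨w, hw, w', hw', hww'⟩ := Submodule.mem_sup.1 (hle huU)
    have hmem : u - w ∈ U ⊓ W' := by
      refine ⟨U.sub_mem huU (hWU hw), ?_⟩
      have : u - w = w' := by rw [← hww']; ring
      rw [this]; exact hw'
    rw [hinf, Submodule.mem_bot, sub_eq_zero] at hmem
    exact huW (hmem ▸ hw)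
  · intro hle
    by_contra hinf
    obtain ⟨u, huUW', hu0⟩ := (Submodule.ne_bot_iff _).1 hinf
    have huU : u ∈ U := huUW'.1
    have huW' : u ∈ W' := huUW'.2
    have huW : u ∉ W := by
      intro hmem
      exact hu0 (by simpa [Submodule.mem_bot] using hWW' ▸ (Submodule.mem_inf.2 ⟨hmem, huW'⟩) :)
    set U' : Submodule F (Fin n → F) := W ⊔ (F ∙ u) with hU'
    have hU'le : U' ≤ U := sup_le hWU ((Submodule.span_singleton_le_iff_mem _ _).2 huU)
    have hWlt : W < U' := by
      refine lt_of_le_of_ne le_sup_left ?_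
      intro heq
      exact huW (heq ▸ ((le_sup_right : (F ∙ u) ≤ U') (Submodule.mem_span_singleton_self u) : u ∈ U'))
    have hrank : finrank F U ≤ finrank F U' := by
      have := Submodule.finrank_lt_finrank_of_lt hWlt
      omega
    have : U' = U := Submodule.eq_of_le_of_finrank_le hU'le hrank
    apply hle
    rw [← this]
    exact sup_le_sup_left ((Submodule.span_singleton_le_iff_mem _ _).2 huW') W

/-- Auxiliary: for `v ∉ H`, `W ≤ H`, `W ⊔ span v` has dimension `finrank W + 1`. -/
lemma lemSpan {F : Type} [Field F] [Fintype F] {n : ℕ} (H W : Submodule F (Fin n → F))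
    (hW : W ≤ H) (v : Fin n → F) (hv : v ∉ H) :
    finrank F (W ⊔ (F ∙ v) : Submodule F (Fin n → F)) = finrank F W + 1 := by
  have hv0 : v ≠ 0 := fun h => hv (h ▸ H.zero_mem)
  have hvW : v ∉ W := fun h => hv (hW h)
  have hinf : W ⊓ (F ∙ v) = ⊥ :=
    ((Submodule.disjoint_span_singleton).2 (fun h => absurd h hvW)).eq_bot
  have h1 : finrank F (F ∙ v : Submodule F (Fin n → F)) = 1 := finrank_span_singleton hv0
  have := Submodule.finrank_sup_add_finrank_inf_eq W (F ∙ v)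
  rw [hinf, h1, finrank_bot] at this
  omega

/-- Counting lemma: the number of `(d+1)`-dimensional subspaces `U` containing a fixed
`d`-dimensional `W` and not contained in a fixed hyperplane `H ⊇ W` is `q^(n-1-d)`. -/
lemma lemB {F : Type} [Field F] [Fintype F] {n q d : ℕ} (hF : Fintype.card F = q)
    (H W : Submodule F (Fin n → F)) (hW : W ≤ H) (hHr : finrank F H + 1 = n)
    (hWr : finrank F W = d) :
    Set.ncard {U : Submodule F (Fin n → F) | W ≤ U ∧ finrank F U = d + 1 ∧ ¬ U ≤ H}
      = q ^ (n - 1 - d) := by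
  classical
  haveI := my_finite_submodule F n
  haveI : Fintype (Submodule F (Fin n → F)) := Fintype.ofFinite _
  have hq2 : 2 ≤ q := hF ▸ Fintype.one_lt_card
  have hVn : finrank F (Fin n → F) = n := Module.finrank_fin_fun F
  have hdH : d ≤ n - 1 := by
    have := hWr ▸ Submodule.finrank_mono hW
    omega
  set s : Finset (Fin n → F) := Finset.univ.filter (fun v => v ∉ H) with hs
  set t : Finset (Submodule F (Fin n → F)) :=
    Finset.univ.filter (fun U => W ≤ U ∧ finrank F U = d + 1 ∧ ¬ U ≤ H) with ht
  set f : (Fin n → F) → Submodule F (Fin n → F) := fun v => W ⊔ (F ∙ v) with hf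
  -- cardinality of a submodule
  have cardsub : ∀ U : Submodule F (Fin n → F),
      (Finset.univ.filter (fun v => v ∈ U)).card = q ^ finrank F U := by
    intro U
    rw [← Fintype.card_subtype]
    rw [show Fintype.card {v // v ∈ U} = Fintype.card U from rfl]
    rw [card_eq_pow_finrank (K := F) (V := U), hF]
  have hmaps : ∀ v ∈ s, f v ∈ t := by
    intro v hv
    rw [hs, Finset.mem_filter] at hv
    have hvH : v ∉ H := hv.2
    rw [ht, Finset.mem_filter]
    refine ⟨Finset.mem_univ _, le_sup_left, by rw [hf]; simpa [hWr] using lemSpan H W hW v hvH, ?_⟩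
    intro hle
    exact hvH (hle ((le_sup_right : (F ∙ v) ≤ f v) (Submodule.mem_span_singleton_self v)))
  have hfiber : ∀ U ∈ t, (s.filter (fun v => f v = U)).card = q ^ (d + 1) - q ^ d := by
    intro U hU
    rw [ht, Finset.mem_filter] at hU
    obtain ⟨-, hWU, hUr, hUH⟩ := hU
    -- the fiber is U \ H
    have hset : s.filter (fun v => f v = U) = Finset.univ.filter (fun v => v ∈ U ∧ v ∉ H) := by
      ext v
      simp only [hs, Finset.mem_filter, Finset.mem_univ, true_and]
      constructor
      · rintro ⟨hvH, rfl⟩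
        exact ⟨(le_sup_right : (F ∙ v) ≤ f v) (Submodule.mem_span_singleton_self v), hvH⟩
      · rintro ⟨hvU, hvH⟩
        refine ⟨hvH, ?_⟩
        have hle : f v ≤ U := sup_le hWU ((Submodule.span_singleton_le_iff_mem _ _).2 hvU)
        have hr : finrank F U ≤ finrank F (f v) := by
          rw [hUr, hf]; rw [lemSpan H W hW v hvH, hWr]
        exact Submodule.eq_of_le_of_finrank_le hle hr
    -- U ⊓ H = W
    have hUHW : ∀ v, v ∈ U ∧ v ∈ H ↔ v ∈ W := by
      have h1 : W ≤ U ⊓ H := le_inf hWU hW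
      have h2 : finrank F (U ⊓ H : Submodule F (Fin n → F)) ≤ d := by
        by_contra hc
        push_neg at hc
        have : finrank F U ≤ finrank F (U ⊓ H : Submodule F (Fin n → F)) := by omega
        have := Submodule.eq_of_le_of_finrank_le inf_le_left this
        exact hUH (this ▸ inf_le_right)
      have : W = U ⊓ H := Submodule.eq_of_le_of_finrank_le h1 (by omega)
      intro v
      rw [← Submodule.mem_inf, ← this]
    have hcardU := cardsub U
    have hcardW := cardsub W
    rw [hUr] at hcardU
    rw [hWr] at hcardW
    have e1 : Finset.univ.filter (fun v => v ∈ U ∧ v ∉ H)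
        = (Finset.univ.filter (fun v => v ∈ U)) \ (Finset.univ.filter (fun v => v ∈ W)) := by
      ext v
      simp only [Finset.mem_filter, Finset.mem_sdiff, Finset.mem_univ, true_and]
      constructor
      · rintro ⟨hvU, hvH⟩
        exact ⟨hvU, fun hvW => hvH ((hUHW v).2 hvW).2⟩
      · rintro ⟨hvU, hvW⟩
        exact ⟨hvU, fun hvH => hvW ((hUHW v).1 ⟨hvU, hvH⟩)⟩
    have hsub : (Finset.univ.filter (fun v => v ∈ W)) ⊆ (Finset.univ.filter (fun v => v ∈ U)) := by
      intro v hv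
      simp only [Finset.mem_filter, Finset.mem_univ, true_and] at hv ⊢
      exact hWU hv
    rw [hset, e1, Finset.card_sdiff_of_subset hsub, hcardU, hcardW]
  have hscard : s.card = q ^ n - q ^ (n - 1) := by
    have h1 : (Finset.univ.filter (fun v : Fin n → F => v ∈ H)).card = q ^ (n - 1) := by
      rw [cardsub H]; congr 1; omega
    have h2 : (Finset.univ : Finset (Fin n → F)).card = q ^ n := by
      rw [Finset.card_univ, card_eq_pow_finrank (K := F), hF, hVn]
    have e1 : s = Finset.univ \ (Finset.univ.filter (fun v : Fin n → F => v ∈ H)) := by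
      ext v
      simp [hs]
    rw [e1, Finset.card_sdiff_of_subset (Finset.filter_subset _ _), h1, h2]
  have hkey : s.card = t.card * (q ^ (d + 1) - q ^ d) := by
    rw [Finset.card_eq_sum_card_fiberwise hmaps]
    rw [Finset.sum_congr rfl hfiber, Finset.sum_const, smul_eq_mul]
  have harith : q ^ n - q ^ (n - 1) = q ^ (n - 1 - d) * (q ^ (d + 1) - q ^ d) := by
    rw [Nat.mul_sub, ← pow_add, ← pow_add]
    congr 2 <;> omega
  have hpos : 0 < q ^ (d + 1) - q ^ d := by
    have : q ^ d < q ^ (d + 1) := Nat.pow_lt_pow_right (by omega) (by omega)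
    omega
  have : t.card = q ^ (n - 1 - d) := by
    have := hscard ▸ hkey
    rw [harith] at this
    exact Nat.eq_of_mul_eq_mul_right hpos this.symm
  rw [← this, Set.ncard_eq_toFinset_card']
  congr 1
  ext U
  simp [ht, Set.mem_toFinset]

lemma lemCompl {F : Type} [Field F] [Fintype F] {n : ℕ} (Y' Y : Submodule F (Fin n → F))
    (h1 : finrank F Y' + finrank F Y = n) : IsCompl Y' Y ↔ Y' ⊓ Y = ⊥ := by
  constructor
  · intro h
    exact disjoint_iff.1 h.disjoint
  · intro h
    rw [isCompl_iff]
    refine ⟨disjoint_iff.2 h, codisjoint_iff.2 ?_⟩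
    apply Submodule.eq_top_of_finrank_eq
    have h2 := Submodule.finrank_sup_add_finrank_inf_eq Y' Y
    rw [h, finrank_bot] at h2
    rw [Module.finrank_fin_fun]
    omega

/-- For `1 ≤ s ≤ n/2` and `h ∈ Ker R(q)_{n-s}` (i.e. `∑_{Y' ⊂ Z', dim Y' = n-s} h Y' = 0`
for every `(n-s+1)`-dimensional `Z'`), the function
`C(q)_s* h : W ↦ ∑_{W' ⊕ W = V} h W'` lies in `Ker R(q)_{s-1}*`: for every
`(s-1)`-dimensional `Z`, `∑_{Y ⊃ Z, dim Y = s} ∑_{Y' ⊕ Y = V} h Y' = 0`. -/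
theorem stmt19 (q n s : ℕ) (F : Type) [Field F] [Fintype F] (hF : Fintype.card F = q)
    (hs : 1 ≤ s) (hsn : 2 * s ≤ n)
    (h : Submodule F (Fin n → F) → ℂ)
    (hker : ∀ Z' : Submodule F (Fin n → F), finrank F Z' = n - s + 1 →
      (∑ᶠ Y' ∈ {Y' : Submodule F (Fin n → F) | Y' ≤ Z' ∧ finrank F Y' = n - s}, h Y') = 0) :
    ∀ Z : Submodule F (Fin n → F), finrank F Z = s - 1 →
      (∑ᶠ Y ∈ {Y : Submodule F (Fin n → F) | Z ≤ Y ∧ finrank F Y = s},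
        ∑ᶠ Y' ∈ {Y' : Submodule F (Fin n → F) | finrank F Y' = n - s ∧ IsCompl Y' Y},
          h Y') = 0 := by
  intro Z hZ
  classical
  haveI := my_finite_submodule F n
  haveI : Fintype (Submodule F (Fin n → F)) := Fintype.ofFinite _
  have hq2 : 2 ≤ q := hF ▸ Fintype.one_lt_card
  have hVn : finrank F (Fin n → F) = n := Module.finrank_fin_fun F
  have hsn' : s ≤ n := by omega
  set G : Finset (Submodule F (Fin n → F)) :=
    Finset.univ.filter (fun Y' => finrank F Y' = n - s ∧ Y' ⊓ Z = ⊥) with hG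
  set T : ℂ := ∑ Y' ∈ G, h Y' with hT
  -- dimension of Z ⊔ Y' for good Y'
  have hsup : ∀ Y' : Submodule F (Fin n → F), finrank F Y' = n - s → Y' ⊓ Z = ⊥ →
      finrank F (Z ⊔ Y' : Submodule F (Fin n → F)) + 1 = n := by
    intro Y' hr hz
    have h2 := Submodule.finrank_sup_add_finrank_inf_eq Z Y'
    rw [inf_comm, hz, finrank_bot, hZ, hr] at h2
    omega
  -- first count
  have hcount1 : ∀ Y' : Submodule F (Fin n → F),
      ((Finset.univ.filter (fun Y : Submodule F (Fin n → F) => Z ≤ Y ∧ finrank F Y = s)).filter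
        (fun Y => finrank F Y' = n - s ∧ IsCompl Y' Y)).card
      = if (finrank F Y' = n - s ∧ Y' ⊓ Z = ⊥) then q ^ (n - s) else 0 := by
    intro Y'
    by_cases hgood : finrank F Y' = n - s ∧ Y' ⊓ Z = ⊥
    · obtain ⟨hr, hz⟩ := hgood
      rw [if_pos ⟨hr, hz⟩]
      have hzy : Z ⊓ Y' = ⊥ := by rw [inf_comm]; exact hz
      have hiff : ∀ Y : Submodule F (Fin n → F), Z ≤ Y → finrank F Y = s →
          (IsCompl Y' Y ↔ ¬ Y ≤ Z ⊔ Y') := by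
        intro Y hZY hYr
        rw [lemCompl Y' Y (by rw [hr, hYr]; omega), inf_comm]
        exact lemA Z Y' Y hzy hZY (by rw [hYr, hZ]; omega)
      have hset : ((Finset.univ.filter (fun Y : Submodule F (Fin n → F) => Z ≤ Y ∧ finrank F Y = s)).filter
            (fun Y => finrank F Y' = n - s ∧ IsCompl Y' Y))
          = {Y : Submodule F (Fin n → F) | Z ≤ Y ∧ finrank F Y = (s - 1) + 1 ∧ ¬ Y ≤ Z ⊔ Y'}.toFinset := by
        ext Y
        simp only [Finset.mem_filter, Finset.mem_univ, true_and, Set.mem_toFinset,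
          Set.mem_setOf_eq]
        have hs1 : s - 1 + 1 = s := by omega
        rw [hs1]
        constructor
        · rintro ⟨⟨h1, h2⟩, -, h4⟩
          exact ⟨h1, h2, (hiff Y h1 h2).1 h4⟩
        · rintro ⟨h1, h2, h3⟩
          exact ⟨⟨h1, h2⟩, hr, (hiff Y h1 h2).2 h3⟩
      rw [hset, ← Set.ncard_eq_toFinset_card']
      have := lemB hF (Z ⊔ Y') Z le_sup_left (hsup Y' hr hz) hZ
      rw [this]
      congr 1
      omega
    · rw [if_neg hgood]
      rw [Finset.card_eq_zero, Finset.filter_eq_empty_iff]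
      rintro Y hY ⟨hr, hc⟩
      rw [Finset.mem_filter] at hY
      apply hgood
      refine ⟨hr, ?_⟩
      have h1 : Y' ⊓ Z ≤ Y' ⊓ Y := inf_le_inf_left Y' hY.2.1
      have h2 : Y' ⊓ Y = ⊥ := disjoint_iff.1 hc.disjoint
      exact le_bot_iff.1 (h2 ▸ h1)
  -- second count
  have hcount2 : ∀ Y' : Submodule F (Fin n → F),
      ((Finset.univ.filter (fun Z' : Submodule F (Fin n → F) =>
          finrank F Z' = n - s + 1 ∧ Z' ⊓ Z = ⊥)).filter
        (fun Z' => Y' ≤ Z' ∧ finrank F Y' = n - s)).card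
      = if (finrank F Y' = n - s ∧ Y' ⊓ Z = ⊥) then q ^ (s - 1) else 0 := by
    intro Y'
    by_cases hgood : finrank F Y' = n - s ∧ Y' ⊓ Z = ⊥
    · obtain ⟨hr, hz⟩ := hgood
      rw [if_pos ⟨hr, hz⟩]
      have hiff : ∀ Z' : Submodule F (Fin n → F), Y' ≤ Z' → finrank F Z' = n - s + 1 →
          (Z' ⊓ Z = ⊥ ↔ ¬ Z' ≤ Y' ⊔ Z) := by
        intro Z' hYZ' hZ'r
        exact lemA Y' Z Z' hz hYZ' (by rw [hZ'r, hr])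
      have hset : ((Finset.univ.filter (fun Z' : Submodule F (Fin n → F) =>
            finrank F Z' = n - s + 1 ∧ Z' ⊓ Z = ⊥)).filter
          (fun Z' => Y' ≤ Z' ∧ finrank F Y' = n - s))
          = {Z' : Submodule F (Fin n → F) |
              Y' ≤ Z' ∧ finrank F Z' = (n - s) + 1 ∧ ¬ Z' ≤ Y' ⊔ Z}.toFinset := by
        ext Z'
        simp only [Finset.mem_filter, Finset.mem_univ, true_and, Set.mem_toFinset,
          Set.mem_setOf_eq]
        constructor
        · rintro ⟨⟨h1, h2⟩, h3, -⟩
          exact ⟨h3, h1, (hiff Z' h3 h1).1 h2⟩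
        · rintro ⟨h1, h2, h3⟩
          exact ⟨⟨h2, (hiff Z' h1 h2).2 h3⟩, h1, hr⟩
      rw [hset, ← Set.ncard_eq_toFinset_card']
      have hH : finrank F (Y' ⊔ Z : Submodule F (Fin n → F)) + 1 = n := by
        have := hsup Y' hr hz
        rw [sup_comm] at this
        exact this
      have := lemB hF (Y' ⊔ Z) Y' le_sup_left hH hr
      rw [this]
      congr 1
      omega
    · rw [if_neg hgood]
      rw [Finset.card_eq_zero, Finset.filter_eq_empty_iff]
      rintro Z' hZ' ⟨hle, hr⟩
      rw [Finset.mem_filter] at hZ'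
      apply hgood
      refine ⟨hr, ?_⟩
      have h1 : Y' ⊓ Z ≤ Z' ⊓ Z := inf_le_inf_right Z hle
      exact le_bot_iff.1 (hZ'.2.2 ▸ h1)
  -- rewrite the goal as a finset sum
  have hAfin : {Y : Submodule F (Fin n → F) | Z ≤ Y ∧ finrank F Y = s}
      = ↑(Finset.univ.filter (fun Y : Submodule F (Fin n → F) => Z ≤ Y ∧ finrank F Y = s)) := by
    ext Y; simp
  rw [hAfin, finsum_mem_coe_finset]
  have hinner : ∀ Y : Submodule F (Fin n → F),
      {Y' : Submodule F (Fin n → F) | finrank F Y' = n - s ∧ IsCompl Y' Y}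
      = ↑(Finset.univ.filter
          (fun Y' : Submodule F (Fin n → F) => finrank F Y' = n - s ∧ IsCompl Y' Y)) := by
    intro Y
    ext Y'; simp
  rw [Finset.sum_congr rfl
    (fun Y _ => by rw [hinner Y, finsum_mem_coe_finset] :
      ∀ Y ∈ Finset.univ.filter (fun Y : Submodule F (Fin n → F) => Z ≤ Y ∧ finrank F Y = s),
        (∑ᶠ Y' ∈ {Y' : Submodule F (Fin n → F) | finrank F Y' = n - s ∧ IsCompl Y' Y}, h Y')
        = ∑ Y' ∈ Finset.univ.filter
            (fun Y' : Submodule F (Fin n → F) => finrank F Y' = n - s ∧ IsCompl Y' Y), h Y')]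
  -- swap and count
  have key : ∀ (A : Finset (Submodule F (Fin n → F)))
      (P : Submodule F (Fin n → F) → Submodule F (Fin n → F) → Prop) [∀ a b, Decidable (P a b)],
      (∑ Y ∈ A, ∑ Y' ∈ Finset.univ.filter (fun Y' => P Y' Y), h Y')
      = ∑ Y' : Submodule F (Fin n → F), ((A.filter (fun Y => P Y' Y)).card : ℂ) * h Y' := by
    intro A P _
    have e1 : ∀ Y ∈ A, ∑ Y' ∈ Finset.univ.filter (fun Y' => P Y' Y), h Y'
        = ∑ Y' : Submodule F (Fin n → F), if P Y' Y then h Y' else 0 :=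
      fun Y _ => Finset.sum_filter _ _
    rw [Finset.sum_congr rfl e1, Finset.sum_comm]
    refine Finset.sum_congr rfl fun Y' _ => ?_
    rw [← Finset.sum_filter, Finset.sum_const, nsmul_eq_mul]
  rw [key]
  have e2 : ∀ Y' : Submodule F (Fin n → F),
      (((Finset.univ.filter (fun Y : Submodule F (Fin n → F) =>
          Z ≤ Y ∧ finrank F Y = s)).filter
        (fun Y => finrank F Y' = n - s ∧ IsCompl Y' Y)).card : ℂ) * h Y'
      = if (finrank F Y' = n - s ∧ Y' ⊓ Z = ⊥) then (q ^ (n - s) : ℂ) * h Y' else 0 := by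
    intro Y'
    rw [hcount1 Y']
    by_cases hgood : finrank F Y' = n - s ∧ Y' ⊓ Z = ⊥
    · rw [if_pos hgood, if_pos hgood]; push_cast; ring
    · rw [if_neg hgood, if_neg hgood]; push_cast; ring
  rw [Finset.sum_congr rfl (fun Y' _ => e2 Y'), ← Finset.sum_filter, ← hG, ← Finset.mul_sum, ← hT]
  -- second identity : q^(s-1) * T = 0
  have hkerC : ∑ Z' ∈ Finset.univ.filter (fun Z' : Submodule F (Fin n → F) =>
      finrank F Z' = n - s + 1 ∧ Z' ⊓ Z = ⊥),
      (∑ Y' ∈ Finset.univ.filter (fun Y' => Y' ≤ Z' ∧ finrank F Y' = n - s), h Y') = 0 := by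
    apply Finset.sum_eq_zero
    intro Z' hZ'
    rw [Finset.mem_filter] at hZ'
    have hBfin : {Y' : Submodule F (Fin n → F) | Y' ≤ Z' ∧ finrank F Y' = n - s}
        = ↑(Finset.univ.filter
            (fun Y' : Submodule F (Fin n → F) => Y' ≤ Z' ∧ finrank F Y' = n - s)) := by
      ext Y'; simp
    have := hker Z' hZ'.2.1
    rw [hBfin, finsum_mem_coe_finset] at this
    exact this
  rw [key] at hkerC
  have e3 : ∀ Y' : Submodule F (Fin n → F),
      (((Finset.univ.filter (fun Z' : Submodule F (Fin n → F) =>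
          finrank F Z' = n - s + 1 ∧ Z' ⊓ Z = ⊥)).filter
        (fun Z' => Y' ≤ Z' ∧ finrank F Y' = n - s)).card : ℂ) * h Y'
      = if (finrank F Y' = n - s ∧ Y' ⊓ Z = ⊥) then (q ^ (s - 1) : ℂ) * h Y' else 0 := by
    intro Y'
    rw [hcount2 Y']
    by_cases hgood : finrank F Y' = n - s ∧ Y' ⊓ Z = ⊥
    · rw [if_pos hgood, if_pos hgood]; push_cast; ring
    · rw [if_neg hgood, if_neg hgood]; push_cast; ring
  rw [Finset.sum_congr rfl (fun Y' _ => e3 Y'), ← Finset.sum_filter, ← hG, ← Finset.mul_sum,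
    ← hT] at hkerC
  have hTzero : T = 0 := by
    have hq0 : ((q : ℂ) ^ (s - 1)) ≠ 0 := by
      apply pow_ne_zero
      simp only [ne_eq, Nat.cast_eq_zero]
      omega
    rcases mul_eq_zero.1 hkerC with h0 | h0
    · exact absurd h0 (by exact_mod_cast hq0)
    · exact h0
  rw [hTzero, mul_zero]
end
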